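/- arXiv:1001.2163 — 4 statements merged into one kernel-verified Lean document; each statement's English description precedes it below -/
import Mathlib

section
/- Let F and F̃ be distribution functions of nonnegative random variables with F(0) < 1, let q₀ ≥ 0, and let e : [0,∞) → [0,∞) be nondecreasing, nonnegative and right-continuous with left-hand limits. Then there exists a unique locally bounded Borel function q : [0,∞) → ℝ satisfying, for all t ≥ 0, the fluid equation q(t) = q₀ − max(q₀ − 1, 0)·F(t) − min(q₀, 1)·F̃(t) + e(t) − ∫₀ᵗ e(t−s) dF(s) + ∫₀ᵗ max(q(t−s) − 1, 0) dF(s); this q is right-continuous with left-hand limits and satisfies q(t) ≥ 0 for all t ≥ 0. -/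
open MeasureTheory Filter Set Topology

/-- `B` is the distribution function of a nonnegative random variable:
it vanishes on the negatives and tends to `1` at infinity. -/
def IsNNDistFun (B : StieltjesFunction ℝ) : Prop :=
  (∀ x < (0 : ℝ), B x = 0) ∧ Tendsto B atTop (nhds 1)

/-- `g` is right-continuous with left-hand limits on `[0,∞)`. -/
def RCLLOnNonneg (g : ℝ → ℝ) : Prop :=
  (∀ t ≥ (0 : ℝ), Tendsto g (nhdsWithin t (Set.Ioi t)) (nhds (g t))) ∧
  (∀ t > (0 : ℝ), ∃ L : ℝ, Tendsto g (nhdsWithin t (Set.Iio t)) (nhds L))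

/-- `q` is a locally bounded Borel function on `[0,∞)`. -/
def LocBddBorel (q : ℝ → ℝ) : Prop :=
  Measurable (fun t : Set.Ici (0 : ℝ) => q t) ∧
  ∀ T > (0 : ℝ), ∃ C : ℝ, ∀ t ∈ Set.Icc (0 : ℝ) T, |q t| ≤ C

/-- `q` satisfies the fluid limit equation (2.3). -/
def SolvesFluid (F Ft : StieltjesFunction ℝ) (q₀ : ℝ) (e : ℝ → ℝ) (q : ℝ → ℝ) : Prop :=
  ∀ t ≥ (0 : ℝ),
    q t = q₀ - max (q₀ - 1) 0 * F t - min q₀ 1 * Ft t + e t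
        - (∫ s in Set.Icc (0 : ℝ) t, e (t - s) ∂F.measure)
        + ∫ s in Set.Icc (0 : ℝ) t, max (q (t - s) - 1) 0 ∂F.measure

/-!
The fluid equation is the renewal equation `q = a + conv μ (φ ∘ q)` with `μ = dF`, a forcing
term `a` built from the data, and the 1-Lipschitz map `φ x = max (x - 1) 0`. Against the weight
`e^{λ t}`, the map `g ↦ a + conv μ (φ ∘ g)` contracts by the factor `∫ e^{-λ s} dμ(s)`, which tends
to `μ {0} = F 0 < 1` as `λ → ∞`. So the Picard iterates started at `0` converge geometrically,
locally uniformly on `[0, ∞)`, and the limit stays Borel and RCLL because convolution with a finite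
measure preserves right-continuity and left limits. The difference `d` of two locally bounded
solutions satisfies `d ≤ conv μ d`, and the same estimate forces `d = 0`. Finally `q ≥ a ≥ 0`.
-/

open Function

noncomputable def conv (μ : Measure ℝ) (h : ℝ → ℝ) (t : ℝ) : ℝ :=
  ∫ s in Icc 0 t, h (t - s) ∂μ

section Convolution

variable {μ : Measure ℝ} {h h₁ h₂ : ℝ → ℝ} {t C : ℝ}

lemma measurable_conv [SFinite μ] (hh : Measurable h) : Measurable (conv μ h) := by
  let H : ℝ × ℝ → ℝ := {p | p.2 ∈ Icc 0 p.1}.indicator fun p => h (p.1 - p.2)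
  have hH : StronglyMeasurable H :=
    ((hh.comp (measurable_fst.sub measurable_snd)).indicator
      ((measurableSet_le measurable_const measurable_snd).inter
        (measurableSet_le measurable_snd measurable_fst))).stronglyMeasurable
  convert (hH.integral_prod_right' (ν := μ)).measurable using 1
  funext t
  rw [conv, ← integral_indicator measurableSet_Icc]
  rfl

lemma conv_const (c : ℝ) : conv μ (fun _ => c) t = c * μ.real (Icc 0 t) := by
  rw [conv, setIntegral_const, smul_eq_mul, mul_comm]

lemma conv_nonneg (hh : ∀ x ∈ Icc 0 t, 0 ≤ h x) : 0 ≤ conv μ h t :=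
  setIntegral_nonneg measurableSet_Icc fun s hs => hh _ ⟨by linarith [hs.2], by linarith [hs.1]⟩

variable [IsFiniteMeasure μ]

lemma integrableOn_conv (hh : Measurable h) (hC : ∀ x ∈ Icc 0 t, |h x| ≤ C) :
    IntegrableOn (fun s => h (t - s)) (Icc 0 t) μ := by
  refine (integrable_const C).mono'
    (hh.comp (measurable_const.sub measurable_id)).aestronglyMeasurable
    ((ae_restrict_iff' measurableSet_Icc).2 (ae_of_all _ fun s hs => ?_))
  exact hC _ ⟨by linarith [hs.2], by linarith [hs.1]⟩

lemma conv_mono (hh₁ : Measurable h₁) (hh₂ : Measurable h₂) {C₁ C₂ : ℝ}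
    (hC₁ : ∀ x ∈ Icc 0 t, |h₁ x| ≤ C₁) (hC₂ : ∀ x ∈ Icc 0 t, |h₂ x| ≤ C₂)
    (hle : ∀ x ∈ Icc 0 t, h₁ x ≤ h₂ x) : conv μ h₁ t ≤ conv μ h₂ t :=
  setIntegral_mono_on (integrableOn_conv hh₁ hC₁) (integrableOn_conv hh₂ hC₂) measurableSet_Icc
    fun s hs => hle _ ⟨by linarith [hs.2], by linarith [hs.1]⟩

lemma abs_conv_sub_conv_le (hh₁ : Measurable h₁) (hh₂ : Measurable h₂) {C₁ C₂ : ℝ}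
    (hC₁ : ∀ x ∈ Icc 0 t, |h₁ x| ≤ C₁) (hC₂ : ∀ x ∈ Icc 0 t, |h₂ x| ≤ C₂) :
    |conv μ h₁ t - conv μ h₂ t| ≤ conv μ (fun x => |h₁ x - h₂ x|) t := by
  rw [conv, conv, ← integral_sub (integrableOn_conv hh₁ hC₁) (integrableOn_conv hh₂ hC₂)]
  exact abs_integral_le_integral_abs

lemma abs_conv_le (hh : Measurable h) (hC : ∀ x ∈ Icc 0 t, |h x| ≤ C) :
    |conv μ h t| ≤ C * μ.real (Icc 0 t) := by
  have hC' : ∀ x ∈ Icc 0 t, |(fun _ => C) x| ≤ |C| := fun _ _ => le_rfl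
  have habs : ∀ x ∈ Icc 0 t, |(fun x => |h x|) x| ≤ C := fun x hx => by simpa using hC x hx
  calc |conv μ h t| ≤ conv μ (fun x => |h x|) t := abs_integral_le_integral_abs
    _ ≤ conv μ (fun _ => C) t := conv_mono hh.abs measurable_const habs hC' hC
    _ = C * μ.real (Icc 0 t) := conv_const C

end Convolution

section WeightedEstimate

variable {μ : Measure ℝ} [IsFiniteMeasure μ]

lemma integrableOn_exp_neg_mul {l : ℝ} (hl : 0 ≤ l) :
    IntegrableOn (fun s => Real.exp (-(l * s))) (Ici 0) μ := by
  refine (integrable_const (1 : ℝ)).mono' (by fun_prop)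
    ((ae_restrict_iff' measurableSet_Ici).2 (ae_of_all _ fun s (hs : 0 ≤ s) => ?_))
  rw [Real.norm_eq_abs, abs_of_pos (Real.exp_pos _), Real.exp_le_one_iff]
  nlinarith

lemma tendsto_setIntegral_exp_neg_mul :
    Tendsto (fun l => ∫ s in Ici 0, Real.exp (-(l * s)) ∂μ) atTop (𝓝 (μ.real {0})) := by
  have hlim : ∀ s ∈ Ici (0 : ℝ), Tendsto (fun l => Real.exp (-(l * s))) atTop
      (𝓝 (({0} : Set ℝ).indicator 1 s)) := by
    intro s (hs : 0 ≤ s)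
    rcases hs.eq_or_lt with rfl | hs
    · simp
    · rw [indicator_of_notMem (by simpa using hs.ne')]
      exact Real.tendsto_exp_atBot.comp (tendsto_neg_atTop_atBot.comp
        (tendsto_id.atTop_mul_const hs))
  have := tendsto_integral_filter_of_dominated_convergence (μ := μ.restrict (Ici 0))
    (fun _ => (1 : ℝ)) (Eventually.of_forall fun l => (by fun_prop : Measurable fun s : ℝ =>
      Real.exp (-(l * s))).aestronglyMeasurable) ?_ (integrable_const 1)
      ((ae_restrict_iff' measurableSet_Ici).2 (ae_of_all _ hlim))
  · rwa [integral_indicator_one (measurableSet_singleton 0), measureReal_restrict_apply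
      (measurableSet_singleton 0), inter_eq_left.2 (by simp)] at this
  · filter_upwards [eventually_ge_atTop 0] with l hl
    exact (ae_restrict_iff' measurableSet_Ici).2 (ae_of_all _ fun s (hs : 0 ≤ s) => by
      rw [Real.norm_eq_abs, abs_of_pos (Real.exp_pos _), Real.exp_le_one_iff]; nlinarith)

lemma conv_le_mul_exp {h : ℝ → ℝ} (hh : Measurable h) {l D t : ℝ} (hl : 0 ≤ l) (hD : 0 ≤ D)
    (hh₀ : ∀ x ∈ Icc 0 t, 0 ≤ h x) (hhD : ∀ x ∈ Icc 0 t, h x ≤ D * Real.exp (l * x)) :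
    conv μ h t ≤ D * Real.exp (l * t) * ∫ s in Ici 0, Real.exp (-(l * s)) ∂μ := by
  have hexp : ∀ x ∈ Icc 0 t, D * Real.exp (l * x) ≤ D * Real.exp (l * t) := fun x hx => by
    gcongr; exact hx.2
  have hbd : ∀ x ∈ Icc 0 t, |h x| ≤ D * Real.exp (l * t) := fun x hx => by
    rw [abs_of_nonneg (hh₀ x hx)]; exact (hhD x hx).trans (hexp x hx)
  have hbd' : ∀ x ∈ Icc 0 t, |D * Real.exp (l * x)| ≤ D * Real.exp (l * t) := fun x hx => by
    rw [abs_of_nonneg (by positivity)]; exact hexp x hx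
  calc conv μ h t ≤ conv μ (fun x => D * Real.exp (l * x)) t :=
        conv_mono (μ := μ) hh (by fun_prop) hbd hbd' hhD
    _ = D * Real.exp (l * t) * ∫ s in Icc 0 t, Real.exp (-(l * s)) ∂μ := by
        rw [conv, ← integral_const_mul]
        refine setIntegral_congr_fun measurableSet_Icc fun s _ => ?_
        rw [mul_assoc, ← Real.exp_add]
        ring_nf
    _ ≤ D * Real.exp (l * t) * ∫ s in Ici 0, Real.exp (-(l * s)) ∂μ := by
        refine mul_le_mul_of_nonneg_left ?_ (by positivity)
        exact setIntegral_mono_set (integrableOn_exp_neg_mul hl)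
          (ae_of_all _ fun s => (Real.exp_pos _).le) Icc_subset_Ici_self.eventuallyLE

lemma exists_le_geometric_of_le_conv (hμ : μ.real {0} < 1) {d : ℕ → ℝ → ℝ}
    (hd : ∀ n, Measurable (d n)) {T C : ℝ} (hd₀ : ∀ n, ∀ x ∈ Icc 0 T, 0 ≤ d n x)
    (hC : ∀ x ∈ Icc 0 T, d 0 x ≤ C) (hstep : ∀ n, ∀ x ∈ Icc 0 T, d (n + 1) x ≤ conv μ (d n) x) :
    ∃ K r : ℝ, 0 ≤ r ∧ r < 1 ∧ ∀ n, ∀ x ∈ Icc 0 T, d n x ≤ K * r ^ n := by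
  obtain ⟨l, hlk, hl⟩ := (((tendsto_setIntegral_exp_neg_mul (μ := μ)).eventually
    (eventually_lt_nhds hμ)).and (eventually_ge_atTop 0)).exists
  set k := ∫ s in Ici 0, Real.exp (-(l * s)) ∂μ
  have hk : 0 ≤ k := setIntegral_nonneg measurableSet_Ici fun s _ => (Real.exp_pos _).le
  rcases lt_or_ge T 0 with hT | hT
  · exact ⟨0, 0, le_rfl, zero_lt_one, fun n x hx => absurd (hx.1.trans hx.2) hT.not_ge⟩
  have hC₀ : 0 ≤ C := (hd₀ 0 0 ⟨le_rfl, hT⟩).trans (hC 0 ⟨le_rfl, hT⟩)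
  have hexp : ∀ n, ∀ x ∈ Icc 0 T, d n x ≤ C * k ^ n * Real.exp (l * x) := by
    intro n
    induction n with
    | zero =>
      intro x hx
      simpa using (hC x hx).trans (le_mul_of_one_le_right hC₀
        (Real.one_le_exp (mul_nonneg hl hx.1)))
    | succ n ih =>
      intro x hx
      have hsub : ∀ y ∈ Icc 0 x, y ∈ Icc 0 T := fun y hy => ⟨hy.1, hy.2.trans hx.2⟩
      calc d (n + 1) x ≤ conv μ (d n) x := hstep n x hx
        _ ≤ C * k ^ n * Real.exp (l * x) * k := conv_le_mul_exp (hd n) hl (by positivity)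
            (fun y hy => hd₀ n y (hsub y hy)) fun y hy => ih y (hsub y hy)
        _ = C * k ^ (n + 1) * Real.exp (l * x) := by ring
  refine ⟨C * Real.exp (l * T), k, hk, hlk, fun n x hx => (hexp n x hx).trans ?_⟩
  rw [mul_right_comm]
  gcongr
  exact hx.2

lemma eqOn_zero_of_le_conv (hμ : μ.real {0} < 1) {d : ℝ → ℝ} (hd : Measurable d) {T C : ℝ}
    (hd₀ : ∀ x ∈ Icc 0 T, 0 ≤ d x) (hC : ∀ x ∈ Icc 0 T, d x ≤ C)
    (hle : ∀ x ∈ Icc 0 T, d x ≤ conv μ d x) : EqOn d 0 (Icc 0 T) := by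
  obtain ⟨K, r, hr₀, hr₁, hK⟩ := exists_le_geometric_of_le_conv hμ (d := fun _ => d)
    (fun _ => hd) (fun _ => hd₀) hC fun _ => hle
  intro x hx
  refine le_antisymm (ge_of_tendsto (x := atTop) ?_ (Eventually.of_forall fun n => hK n x hx))
    (hd₀ x hx)
  simpa using (tendsto_pow_atTop_nhds_zero_of_lt_one hr₀ hr₁).const_mul K

end WeightedEstimate

section ConvolutionRCLL

variable {μ : Measure ℝ} {h : ℝ → ℝ}

lemma RCLLOnNonneg.tendsto_indicator_nhdsGT (hh : RCLLOnNonneg h) (x : ℝ) :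
    Tendsto ((Ici 0).indicator h) (𝓝[>] x) (𝓝 ((Ici 0).indicator h x)) := by
  rcases lt_or_ge x 0 with hx | hx
  · rw [indicator_of_notMem (notMem_Ici.2 hx)]
    refine tendsto_const_nhds.congr' (eventually_nhdsWithin_of_eventually_nhds ?_)
    filter_upwards [Iio_mem_nhds hx] with y (hy : y < 0)
    rw [indicator_of_notMem (notMem_Ici.2 hy)]
  · rw [indicator_of_mem (mem_Ici.2 hx)]
    refine (hh.1 x hx).congr' (eventually_nhdsWithin_of_forall fun y (hy : x < y) => ?_)
    rw [indicator_of_mem (mem_Ici.2 (hx.trans hy.le))]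

lemma RCLLOnNonneg.exists_tendsto_indicator_nhdsLT (hh : RCLLOnNonneg h) (x : ℝ) :
    ∃ L, Tendsto ((Ici 0).indicator h) (𝓝[<] x) (𝓝 L) := by
  rcases le_or_gt x 0 with hx | hx
  · refine ⟨0, tendsto_const_nhds.congr' (eventually_nhdsWithin_of_forall fun y (hy : y < x) => ?_)⟩
    rw [indicator_of_notMem (notMem_Ici.2 (hy.trans_le hx))]
  · obtain ⟨L, hL⟩ := hh.2 x hx
    refine ⟨L, hL.congr' ?_⟩
    filter_upwards [Ioo_mem_nhdsLT hx] with y hy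
    rw [indicator_of_mem (mem_Ici.2 hy.1.le)]

/-- Extending `h` by zero to negative times turns the moving domain `[0, u]` of `conv μ h u` into
a fixed one, so that continuity in `u` becomes dominated convergence. -/
lemma conv_eq_setIntegral_indicator {u T : ℝ} (hu : u ≤ T) :
    conv μ h u = ∫ s in Icc 0 T, (Ici 0).indicator h (u - s) ∂μ := by
  have : ∀ s, (Ici 0).indicator h (u - s) = (Iic u).indicator (fun s => h (u - s)) s := fun s => by
    by_cases hs : s ≤ u
    · rw [indicator_of_mem (mem_Ici.2 (sub_nonneg.2 hs)), indicator_of_mem (mem_Iic.2 hs)]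
    · rw [indicator_of_notMem (by simpa using hs), indicator_of_notMem (by simpa using hs)]
  have hI : Icc 0 T ∩ Iic u = Icc 0 u := by
    rw [← Ici_inter_Iic, inter_assoc, Iic_inter_Iic, inf_eq_right.2 hu, Ici_inter_Iic]
  simp_rw [this, setIntegral_indicator measurableSet_Iic, hI, conv]

variable [IsFiniteMeasure μ]

lemma tendsto_setIntegral_comp_sub {l : Filter ℝ} [l.IsCountablyGenerated] {H G : ℝ → ℝ}
    {T C : ℝ} (hH : Measurable H) (hC : ∀ x ≤ T, |H x| ≤ C) (hl : ∀ᶠ u in l, u ≤ T)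
    (hlim : ∀ s, Tendsto (fun u => H (u - s)) l (𝓝 (G s))) :
    Tendsto (fun u => ∫ s in Icc 0 T, H (u - s) ∂μ) l (𝓝 (∫ s in Icc 0 T, G s ∂μ)) := by
  refine tendsto_integral_filter_of_dominated_convergence (fun _ => C)
    (Eventually.of_forall fun u =>
      (hH.comp (measurable_const.sub measurable_id)).aestronglyMeasurable)
    ?_ (integrable_const C) (ae_of_all _ hlim)
  filter_upwards [hl] with u hu
  exact (ae_restrict_iff' measurableSet_Icc).2 (ae_of_all _ fun s hs => hC _ (by linarith [hs.1]))

lemma RCLLOnNonneg.conv (hh : Measurable h) (hb : ∀ T, ∃ C, ∀ x ∈ Icc 0 T, |h x| ≤ C)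
    (hr : RCLLOnNonneg h) : RCLLOnNonneg (conv μ h) := by
  have hH : Measurable ((Ici 0).indicator h) := hh.indicator measurableSet_Ici
  have hHb : ∀ T, ∃ C, ∀ x ≤ T, |(Ici 0).indicator h x| ≤ C := fun T => by
    obtain ⟨C, hC⟩ := hb T
    refine ⟨max C 0, fun x hx => ?_⟩
    by_cases hx₀ : 0 ≤ x
    · rw [indicator_of_mem (mem_Ici.2 hx₀)]; exact (hC x ⟨hx₀, hx⟩).trans (le_max_left _ _)
    · rw [indicator_of_notMem (by simpa using hx₀)]; simp
  refine ⟨fun t _ => ?_, fun t _ => ?_⟩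
  · obtain ⟨C, hC⟩ := hHb (t + 1)
    have hev : ∀ᶠ u in 𝓝[>] t, u ≤ t + 1 :=
      eventually_nhdsWithin_of_eventually_nhds (eventually_le_nhds (by linarith))
    rw [conv_eq_setIntegral_indicator (by linarith : t ≤ t + 1)]
    refine (tendsto_setIntegral_comp_sub hH hC hev fun s => ?_).congr'
      (hev.mono fun u hu => (conv_eq_setIntegral_indicator hu).symm)
    exact (hr.tendsto_indicator_nhdsGT (t - s)).comp <| tendsto_nhdsWithin_iff.2
      ⟨((continuous_sub_right s).tendsto t).mono_left nhdsWithin_le_nhds,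
        eventually_nhdsWithin_of_forall fun u (hu : t < u) => sub_lt_sub_right hu s⟩
  · obtain ⟨C, hC⟩ := hHb t
    have hev : ∀ᶠ u in 𝓝[<] t, u ≤ t := eventually_nhdsWithin_of_forall fun u hu => le_of_lt hu
    refine ⟨_, (tendsto_setIntegral_comp_sub (G := fun s => leftLim ((Ici 0).indicator h) (t - s))
      hH hC hev fun s => ?_).congr' (hev.mono fun u hu => (conv_eq_setIntegral_indicator hu).symm)⟩
    obtain ⟨L, hL⟩ := hr.exists_tendsto_indicator_nhdsLT (t - s)
    rw [leftLim_eq_of_tendsto hL]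
    exact hL.comp <| tendsto_nhdsWithin_iff.2
      ⟨((continuous_sub_right s).tendsto t).mono_left nhdsWithin_le_nhds,
        eventually_nhdsWithin_of_forall fun u (hu : u < t) => sub_lt_sub_right hu s⟩

end ConvolutionRCLL

lemma TendstoUniformlyOnFilter.exists_tendsto {ι α β : Type*} [PseudoMetricSpace β]
    [CompleteSpace β] {p : Filter ι} [p.NeBot] {l : Filter α} [l.NeBot] {G : ι → α → β}
    {g : α → β} (h : TendstoUniformlyOnFilter G g p l) (hG : ∀ i, ∃ L, Tendsto (G i) l (𝓝 L)) :
    ∃ L, Tendsto g l (𝓝 L) := by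
  simp_rw [← cauchy_map_iff_exists_tendsto, cauchy_map_iff',
    Metric.uniformity_basis_dist.tendsto_right_iff] at hG ⊢
  intro ε hε
  obtain ⟨i, hi⟩ := (Metric.tendstoUniformlyOnFilter_iff.1 h (ε / 3) (by positivity)).curry.exists
  filter_upwards [hG i (ε / 3) (by positivity), hi.prod_mk hi] with x hGx ⟨h₁, h₂⟩
  calc dist (g x.1) (g x.2) ≤ dist (g x.1) (G i x.1) + dist (g x.2) (G i x.2)
        + dist (G i x.1) (G i x.2) := dist_triangle4_right _ _ _ _
    _ < ε / 3 + ε / 3 + ε / 3 := by gcongr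
    _ = ε := by ring

lemma tendstoUniformlyOn_limUnder_of_le_geometric {α β : Type*} [PseudoMetricSpace β]
    [CompleteSpace β] [Nonempty β] {u : ℕ → α → β} {s : Set α} {K r : ℝ} (hr₀ : 0 ≤ r) (hr : r < 1)
    (hu : ∀ n, ∀ x ∈ s, dist (u n x) (u (n + 1) x) ≤ K * r ^ n) :
    TendstoUniformlyOn u (fun x => limUnder atTop (u · x)) atTop s := by
  have hlim : ∀ x ∈ s, Tendsto (u · x) atTop (𝓝 (limUnder atTop (u · x))) := fun x hx =>
    (cauchySeq_of_le_geometric r K hr fun n => hu n x hx).tendsto_limUnder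
  have hK : Tendsto (fun n => K * r ^ n / (1 - r)) atTop (𝓝 0) := by
    simpa using ((tendsto_pow_atTop_nhds_zero_of_lt_one hr₀ hr).const_mul K).div_const (1 - r)
  rw [Metric.tendstoUniformlyOn_iff]
  intro ε hε
  filter_upwards [hK.eventually (gt_mem_nhds hε)] with n hn x hx
  rw [dist_comm]
  exact (dist_le_of_le_geometric_of_tendsto r K hr (fun n => hu n x hx) (hlim x hx) n).trans_lt hn

lemma RCLLOnNonneg.of_tendstoUniformlyOn {G : ℕ → ℝ → ℝ} {g : ℝ → ℝ}
    (hG : ∀ n, RCLLOnNonneg (G n)) (hlim : ∀ T, TendstoUniformlyOn G g atTop (Icc 0 T)) :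
    RCLLOnNonneg g := by
  refine ⟨fun t ht => ?_, fun t ht => ?_⟩
  · refine ((hlim (t + 1)).tendstoUniformlyOnFilter.mono_right (le_principal_iff.2
      (Icc_mem_nhdsGT_of_mem ⟨ht, by linarith⟩))).tendsto_of_eventually_tendsto
      (Eventually.of_forall fun n => (hG n).1 t ht) ((hlim (t + 1)).tendsto_at ⟨ht, by linarith⟩)
  · exact ((hlim t).tendstoUniformlyOnFilter.mono_right (le_principal_iff.2
      (Icc_mem_nhdsLT_of_mem ⟨ht, le_rfl⟩))).exists_tendsto fun n => (hG n).2 t ht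

section Regularity

variable {g g₁ g₂ : ℝ → ℝ}

lemma RCLLOnNonneg.comp₂ {φ : ℝ → ℝ → ℝ} (hφ : Continuous (uncurry φ)) (h₁ : RCLLOnNonneg g₁)
    (h₂ : RCLLOnNonneg g₂) : RCLLOnNonneg fun x => φ (g₁ x) (g₂ x) := by
  refine ⟨fun t ht => (hφ.tendsto _).comp ((h₁.1 t ht).prodMk_nhds (h₂.1 t ht)), fun t ht => ?_⟩
  obtain ⟨L₁, hL₁⟩ := h₁.2 t ht
  obtain ⟨L₂, hL₂⟩ := h₂.2 t ht
  exact ⟨_, (hφ.tendsto _).comp (hL₁.prodMk_nhds hL₂)⟩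

lemma RCLLOnNonneg.comp {φ : ℝ → ℝ} (hφ : Continuous φ) (hg : RCLLOnNonneg g) :
    RCLLOnNonneg (φ ∘ g) :=
  RCLLOnNonneg.comp₂ (φ := fun x _ => φ x) (hφ.comp continuous_fst) hg hg

lemma RCLLOnNonneg.congr (hg : RCLLOnNonneg g₁) (h : EqOn g₁ g₂ (Ici 0)) : RCLLOnNonneg g₂ := by
  refine ⟨fun t ht => ?_, fun t ht => ?_⟩
  · rw [← h (mem_Ici.2 ht)]
    exact (hg.1 t ht).congr' (eventually_nhdsWithin_of_forall fun x (hx : t < x) =>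
      h (mem_Ici.2 (ht.trans hx.le)))
  · obtain ⟨L, hL⟩ := hg.2 t ht
    exact ⟨L, hL.congr' (eventually_nhdsWithin_of_eventually_nhds (Ioi_mem_nhds ht) |>.mono
      fun x hx => h (mem_Ici.2 (le_of_lt hx)))⟩

lemma StieltjesFunction.rcllOnNonneg (F : StieltjesFunction ℝ) : RCLLOnNonneg F :=
  ⟨fun t _ => continuousWithinAt_Ioi_iff_Ici.2 (F.right_continuous t),
    fun t _ => ⟨_, F.mono.tendsto_nhdsLT t⟩⟩

lemma LipschitzWith.abs_le {K : NNReal} {φ : ℝ → ℝ} (hφ : LipschitzWith K φ) (x : ℝ) :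
    |φ x| ≤ |φ 0| + K * |x| := by
  have := hφ.dist_le_mul x 0
  rw [Real.dist_eq, Real.dist_eq, sub_zero] at this
  linarith [abs_sub_abs_le_abs_sub (φ x) (φ 0)]

structure IsBorelRCLL (g : ℝ → ℝ) : Prop where
  measurable : Measurable g
  bounded : ∀ T, ∃ C, ∀ x ∈ Icc 0 T, |g x| ≤ C
  rcll : RCLLOnNonneg g

namespace IsBorelRCLL

lemma const (c : ℝ) : IsBorelRCLL fun _ => c :=
  ⟨measurable_const, fun _ => ⟨|c|, fun _ _ => le_rfl⟩,
    ⟨fun _ _ => tendsto_const_nhds, fun _ _ => ⟨c, tendsto_const_nhds⟩⟩⟩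

lemma add (h₁ : IsBorelRCLL g₁) (h₂ : IsBorelRCLL g₂) : IsBorelRCLL (g₁ + g₂) := by
  refine ⟨h₁.measurable.add h₂.measurable, fun T => ?_,
    h₁.rcll.comp₂ (φ := (· + ·)) continuous_add h₂.rcll⟩
  obtain ⟨C₁, hC₁⟩ := h₁.bounded T
  obtain ⟨C₂, hC₂⟩ := h₂.bounded T
  exact ⟨C₁ + C₂, fun x hx => (abs_add_le _ _).trans (add_le_add (hC₁ x hx) (hC₂ x hx))⟩

lemma neg (h : IsBorelRCLL g) : IsBorelRCLL (-g) := by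
  refine ⟨h.measurable.neg, fun T => ?_, h.rcll.comp (φ := Neg.neg) continuous_neg⟩
  obtain ⟨C, hC⟩ := h.bounded T
  exact ⟨C, fun x hx => by simpa using hC x hx⟩

lemma sub (h₁ : IsBorelRCLL g₁) (h₂ : IsBorelRCLL g₂) : IsBorelRCLL (g₁ - g₂) := by
  simpa [sub_eq_add_neg] using h₁.add h₂.neg

lemma const_mul (h : IsBorelRCLL g) (c : ℝ) : IsBorelRCLL fun x => c * g x := by
  refine ⟨h.measurable.const_mul c, fun T => ?_, h.rcll.comp (continuous_const_mul c)⟩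
  obtain ⟨C, hC⟩ := h.bounded T
  exact ⟨|c| * C, fun x hx => by rw [abs_mul]; gcongr; exact hC x hx⟩

lemma comp_lipschitzWith {K : NNReal} {φ : ℝ → ℝ} (h : IsBorelRCLL g) (hφ : LipschitzWith K φ) :
    IsBorelRCLL (φ ∘ g) := by
  refine ⟨hφ.continuous.measurable.comp h.measurable, fun T => ?_, h.rcll.comp hφ.continuous⟩
  obtain ⟨C, hC⟩ := h.bounded T
  exact ⟨|φ 0| + K * C, fun x hx => (hφ.abs_le _).trans (by gcongr; exact hC x hx)⟩

lemma conv {μ : Measure ℝ} [IsFiniteMeasure μ] (h : IsBorelRCLL g) : IsBorelRCLL (conv μ g) := by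
  refine ⟨measurable_conv h.measurable, fun T => ?_, h.rcll.conv h.measurable h.bounded⟩
  obtain ⟨C, hC⟩ := h.bounded T
  refine ⟨|C| * μ.real univ, fun x hx => (abs_conv_le h.measurable fun y hy => hC y
    ⟨hy.1, hy.2.trans hx.2⟩).trans ?_⟩
  exact mul_le_mul (le_abs_self C) (measureReal_mono (subset_univ _)) measureReal_nonneg
    (abs_nonneg C)

lemma of_monotone (hg : Monotone g) (hr : RCLLOnNonneg g) : IsBorelRCLL g :=
  ⟨hg.measurable, fun T => ⟨max |g 0| |g T|, fun _ hx => abs_le_max_abs_abs (hg hx.1) (hg hx.2)⟩,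
    hr⟩

end IsBorelRCLL

lemma isBorelRCLL_limUnder {G : ℕ → ℝ → ℝ} (hG : ∀ n, IsBorelRCLL (G n))
    (hlim : ∀ T, TendstoUniformlyOn G (fun x => limUnder atTop (G · x)) atTop (Icc 0 T)) :
    IsBorelRCLL fun x => limUnder atTop (G · x) := by
  refine ⟨(StronglyMeasurable.limUnder fun n => (hG n).measurable.stronglyMeasurable).measurable,
    fun T => ?_, RCLLOnNonneg.of_tendstoUniformlyOn (fun n => (hG n).rcll) hlim⟩
  obtain ⟨n, hn⟩ := (Metric.tendstoUniformlyOn_iff.1 (hlim T) 1 one_pos).exists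
  obtain ⟨C, hC⟩ := (hG n).bounded T
  refine ⟨C + 1, fun x hx => ?_⟩
  have := hn x hx
  rw [Real.dist_eq] at this
  linarith [abs_sub_abs_le_abs_sub (limUnder atTop (G · x)) (G n x), hC x hx]

end Regularity

noncomputable def renewalMap (μ : Measure ℝ) (φ a g : ℝ → ℝ) : ℝ → ℝ :=
  a + conv μ (φ ∘ g)

section Renewal

variable {μ : Measure ℝ} [IsFiniteMeasure μ] {φ a g₁ g₂ : ℝ → ℝ}

lemma abs_renewalMap_sub_le (hφ : LipschitzWith 1 φ) (hg₁ : Measurable g₁) (hg₂ : Measurable g₂)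
    {t C₁ C₂ : ℝ} (hC₁ : ∀ x ∈ Icc 0 t, |g₁ x| ≤ C₁) (hC₂ : ∀ x ∈ Icc 0 t, |g₂ x| ≤ C₂) :
    |renewalMap μ φ a g₁ t - renewalMap μ φ a g₂ t| ≤ conv μ (fun x => |g₁ x - g₂ x|) t := by
  have hφm := hφ.continuous.measurable
  have hφC : ∀ {g : ℝ → ℝ} {C}, (∀ x ∈ Icc 0 t, |g x| ≤ C) →
      ∀ x ∈ Icc 0 t, |(φ ∘ g) x| ≤ |φ 0| + C := fun hC x hx =>
    (hφ.abs_le _).trans (by simpa using hC x hx)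
  have hlip : ∀ x, |φ (g₁ x) - φ (g₂ x)| ≤ |g₁ x - g₂ x| := fun x => by
    simpa [Real.dist_eq] using hφ.dist_le_mul (g₁ x) (g₂ x)
  have hbd : ∀ x ∈ Icc 0 t, |(fun x => |g₁ x - g₂ x|) x| ≤ C₁ + C₂ := fun x hx => by
    rw [abs_abs]; exact (abs_sub _ _).trans (add_le_add (hC₁ x hx) (hC₂ x hx))
  calc |renewalMap μ φ a g₁ t - renewalMap μ φ a g₂ t|
      = |conv μ (φ ∘ g₁) t - conv μ (φ ∘ g₂) t| := by simp [renewalMap]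
    _ ≤ conv μ (fun x => |φ (g₁ x) - φ (g₂ x)|) t :=
        abs_conv_sub_conv_le (hφm.comp hg₁) (hφm.comp hg₂) (hφC hC₁) (hφC hC₂)
    _ ≤ conv μ (fun x => |g₁ x - g₂ x|) t :=
        conv_mono ((hφm.comp hg₁).sub (hφm.comp hg₂)).abs (hg₁.sub hg₂).abs
          (fun x hx => by rw [abs_abs]; exact (hlip x).trans (by simpa using hbd x hx))
          hbd fun x _ => hlip x

lemma IsBorelRCLL.renewalMap {K : NNReal} (ha : IsBorelRCLL a) (hφ : LipschitzWith K φ)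
    (hg : IsBorelRCLL g₁) : IsBorelRCLL (renewalMap μ φ a g₁) :=
  ha.add (hg.comp_lipschitzWith hφ).conv

lemma tendsto_renewalMap_of_tendstoUniformlyOn (hφ : LipschitzWith 1 φ) {G : ℕ → ℝ → ℝ} {t : ℝ}
    (hG : ∀ n, IsBorelRCLL (G n)) (hg : IsBorelRCLL g₁)
    (hlim : TendstoUniformlyOn G g₁ atTop (Icc 0 t)) :
    Tendsto (fun n => renewalMap μ φ a (G n) t) atTop (𝓝 (renewalMap μ φ a g₁ t)) := by
  rw [Metric.tendsto_nhds]
  intro ε hε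
  have hm : 0 ≤ μ.real univ := measureReal_nonneg
  filter_upwards [Metric.tendstoUniformlyOn_iff.1 hlim (ε / (μ.real univ + 1)) (by positivity)]
    with n hn
  obtain ⟨C, hC⟩ := (hG n).bounded t
  obtain ⟨C', hC'⟩ := hg.bounded t
  have hmeas := ((hG n).measurable.sub hg.measurable).abs
  rw [Real.dist_eq]
  calc |renewalMap μ φ a (G n) t - renewalMap μ φ a g₁ t|
      ≤ conv μ (fun x => |G n x - g₁ x|) t :=
        abs_renewalMap_sub_le hφ (hG n).measurable hg.measurable hC hC'
    _ ≤ ε / (μ.real univ + 1) * μ.real (Icc 0 t) := (le_abs_self _).trans <|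
        abs_conv_le hmeas fun x hx => by
          rw [abs_abs, abs_sub_comm, ← Real.dist_eq]; exact (hn x hx).le
    _ ≤ ε / (μ.real univ + 1) * μ.real univ :=
        mul_le_mul_of_nonneg_left (measureReal_mono (subset_univ _)) (by positivity)
    _ < ε := by
        rw [div_mul_eq_mul_div, div_lt_iff₀ (by positivity)]
        nlinarith

theorem exists_isBorelRCLL_eq_renewalMap (hμ : μ.real {0} < 1) (hφ : LipschitzWith 1 φ)
    (ha : IsBorelRCLL a) : ∃ q, IsBorelRCLL q ∧ ∀ t ≥ 0, q t = renewalMap μ φ a q t := by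
  set qs : ℕ → ℝ → ℝ := fun n => (renewalMap μ φ a)^[n] 0
  have hsucc : ∀ n, qs (n + 1) = renewalMap μ φ a (qs n) := fun n => iterate_succ_apply' _ n _
  have hreg : ∀ n, IsBorelRCLL (qs n) := by
    intro n
    induction n with
    | zero => exact IsBorelRCLL.const 0
    | succ n ih => rw [hsucc]; exact ha.renewalMap hφ ih
  have hunif : ∀ T, TendstoUniformlyOn qs (fun x => limUnder atTop (qs · x)) atTop (Icc 0 T) := by
    intro T
    obtain ⟨C₀, hC₀⟩ := (hreg 0).bounded T
    obtain ⟨C₁, hC₁⟩ := (hreg 1).bounded T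
    obtain ⟨K, r, hr₀, hr₁, hK⟩ := exists_le_geometric_of_le_conv (μ := μ) hμ
      (d := fun n x => |qs (n + 1) x - qs n x|)
      (fun n => ((hreg _).measurable.sub (hreg n).measurable).abs) (fun _ _ _ => abs_nonneg _)
      (fun x hx => (abs_sub _ _).trans (add_le_add (hC₁ x hx) (hC₀ x hx))) fun n x _ => by
        obtain ⟨C, hC⟩ := (hreg (n + 1)).bounded x
        obtain ⟨C', hC'⟩ := (hreg n).bounded x
        have := abs_renewalMap_sub_le (μ := μ) (a := a) hφ (hreg _).measurable (hreg n).measurable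
          hC hC'
        rwa [← hsucc, ← hsucc] at this
    exact tendstoUniformlyOn_limUnder_of_le_geometric hr₀ hr₁ fun n x hx => by
      rw [dist_comm, Real.dist_eq]; exact hK n x hx
  have hq := isBorelRCLL_limUnder hreg hunif
  refine ⟨_, hq, fun t ht => tendsto_nhds_unique ?_
    (tendsto_renewalMap_of_tendstoUniformlyOn hφ hreg hq (hunif t))⟩
  exact (((hunif t).tendsto_at ⟨ht, le_rfl⟩).comp (tendsto_add_atTop_nat 1)).congr fun n =>
    congrFun (hsucc n) t

theorem eqOn_of_eq_renewalMap (hμ : μ.real {0} < 1) (hφ : LipschitzWith 1 φ) {q₁ q₂ : ℝ → ℝ}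
    (hm₁ : Measurable q₁) (hm₂ : Measurable q₂) (hb₁ : ∀ T, ∃ C, ∀ x ∈ Icc 0 T, |q₁ x| ≤ C)
    (hb₂ : ∀ T, ∃ C, ∀ x ∈ Icc 0 T, |q₂ x| ≤ C) (h₁ : ∀ t ≥ 0, q₁ t = renewalMap μ φ a q₁ t)
    (h₂ : ∀ t ≥ 0, q₂ t = renewalMap μ φ a q₂ t) : EqOn q₁ q₂ (Ici 0) := by
  intro t (ht : 0 ≤ t)
  obtain ⟨C₁, hC₁⟩ := hb₁ t
  obtain ⟨C₂, hC₂⟩ := hb₂ t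
  have hle : ∀ x ∈ Icc 0 t, |q₁ x - q₂ x| ≤ conv μ (fun y => |q₁ y - q₂ y|) x := fun x hx => by
    have hsub : ∀ y ∈ Icc 0 x, y ∈ Icc 0 t := fun y hy => ⟨hy.1, hy.2.trans hx.2⟩
    rw [h₁ x hx.1, h₂ x hx.1]
    exact abs_renewalMap_sub_le hφ hm₁ hm₂ (fun y hy => hC₁ y (hsub y hy))
      fun y hy => hC₂ y (hsub y hy)
  have := eqOn_zero_of_le_conv (μ := μ) hμ (hm₁.sub hm₂).abs (fun _ _ => abs_nonneg _)
    (fun x hx => (abs_sub _ _).trans (add_le_add (hC₁ x hx) (hC₂ x hx))) hle ⟨ht, le_rfl⟩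
  exact sub_eq_zero.1 (abs_eq_zero.1 this)

end Renewal

namespace IsNNDistFun

variable {F : StieltjesFunction ℝ}

lemma nonneg (hF : IsNNDistFun F) (x : ℝ) : 0 ≤ F x := by
  rw [← hF.1 (min x 0 - 1) (by linarith [min_le_right x 0])]
  exact F.mono (by linarith [min_le_left x 0])

lemma le_one (hF : IsNNDistFun F) (x : ℝ) : F x ≤ 1 :=
  ge_of_tendsto hF.2 ((eventually_ge_atTop x).mono fun _ hy => F.mono hy)

lemma leftLim_zero (hF : IsNNDistFun F) : leftLim F 0 = 0 :=
  leftLim_eq_of_tendsto (tendsto_const_nhds.congr' (eventually_nhdsWithin_of_forall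
    fun x (hx : x < 0) => (hF.1 x hx).symm))

lemma isFiniteMeasure (hF : IsNNDistFun F) : IsFiniteMeasure F.measure := by
  have hbot : Tendsto F atBot (𝓝 0) := tendsto_const_nhds.congr' <| by
    filter_upwards [eventually_lt_atBot (0 : ℝ)] with x hx using (hF.1 x hx).symm
  exact ⟨by rw [F.measure_univ hbot hF.2]; exact ENNReal.ofReal_lt_top⟩

lemma measureReal_Icc (hF : IsNNDistFun F) (t : ℝ) : F.measure.real (Icc 0 t) = F t := by
  rw [measureReal_def, F.measure_Icc, hF.leftLim_zero, sub_zero,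
    ENNReal.toReal_ofReal (hF.nonneg t)]

lemma measureReal_singleton_zero (hF : IsNNDistFun F) : F.measure.real {0} = F 0 := by
  rw [measureReal_def, F.measure_singleton, hF.leftLim_zero, sub_zero,
    ENNReal.toReal_ofReal (hF.nonneg 0)]

end IsNNDistFun

/-- `e` is continued to negative times by `e 0`, which keeps it monotone, hence Borel, on `ℝ`. -/
noncomputable def fluidForcing (F Ft : StieltjesFunction ℝ) (q₀ : ℝ) (e : ℝ → ℝ) (t : ℝ) : ℝ :=
  q₀ - max (q₀ - 1) 0 * F t - min q₀ 1 * Ft t + e (max t 0)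
    - conv F.measure (fun x => e (max x 0)) t

lemma lipschitzWith_max_sub_one_zero : LipschitzWith 1 fun x : ℝ => max (x - 1) 0 :=
  LipschitzWith.of_dist_le_mul fun x y => by
    simpa [Real.dist_eq] using abs_max_sub_max_le_abs (x - 1) (y - 1) 0

section Fluid

variable {F Ft : StieltjesFunction ℝ} {q₀ : ℝ} {e q : ℝ → ℝ}

lemma solvesFluid_iff : SolvesFluid F Ft q₀ e q ↔
    ∀ t ≥ 0, q t = renewalMap F.measure (fun x => max (x - 1) 0) (fluidForcing F Ft q₀ e) q t := by
  refine forall₂_congr fun t ht => ?_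
  have he : ∫ s in Icc 0 t, e (t - s) ∂F.measure = conv F.measure (fun x => e (max x 0)) t :=
    setIntegral_congr_fun measurableSet_Icc fun s hs => by
      simp only [max_eq_left (sub_nonneg.2 hs.2)]
  rw [renewalMap, Pi.add_apply, fluidForcing, max_eq_left ht, he]
  rfl

lemma SolvesFluid.comp_max (h : SolvesFluid F Ft q₀ e q) :
    SolvesFluid F Ft q₀ e fun x => q (max x 0) := by
  intro t ht
  simp only [max_eq_left ht]
  rw [h t ht]
  congr 1
  exact setIntegral_congr_fun measurableSet_Icc fun s hs => by
    simp only [max_eq_left (sub_nonneg.2 hs.2)]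

lemma LocBddBorel.measurable_comp_max (h : LocBddBorel q) : Measurable fun x => q (max x 0) :=
  h.1.comp ((measurable_id.max measurable_const).subtype_mk (h := fun x => le_max_right x 0))

lemma LocBddBorel.bounded_comp_max (h : LocBddBorel q) :
    ∀ T, ∃ C, ∀ x ∈ Icc 0 T, |q (max x 0)| ≤ C := fun T => by
  obtain ⟨C, hC⟩ := h.2 (max T 1) (by positivity)
  exact ⟨C, fun x hx => by
    rw [max_eq_left hx.1]; exact hC x ⟨hx.1, hx.2.trans (le_max_left _ _)⟩⟩

lemma IsBorelRCLL.locBddBorel (h : IsBorelRCLL q) : LocBddBorel q :=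
  ⟨h.measurable.comp measurable_subtype_coe, fun T _ => h.bounded T⟩

lemma MonotoneOn.monotone_comp_max (heMono : MonotoneOn e (Ici 0)) :
    Monotone fun x => e (max x 0) := fun x y hxy =>
  heMono (le_max_right x 0) (le_max_right y 0) (max_le_max_right 0 hxy)

lemma isBorelRCLL_fluidForcing (hF : IsNNDistFun F) (heMono : MonotoneOn e (Ici 0))
    (heRcll : RCLLOnNonneg e) : IsBorelRCLL (fluidForcing F Ft q₀ e) := by
  have := hF.isFiniteMeasure
  have hE : IsBorelRCLL fun x => e (max x 0) :=
    .of_monotone heMono.monotone_comp_max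
      (heRcll.congr fun x (hx : 0 ≤ x) => by simp only [max_eq_left hx])
  have hF' := IsBorelRCLL.of_monotone F.mono F.rcllOnNonneg
  have hFt' := IsBorelRCLL.of_monotone Ft.mono Ft.rcllOnNonneg
  exact ((((IsBorelRCLL.const q₀).sub (hF'.const_mul _)).sub (hFt'.const_mul _)).add hE).sub
    hE.conv

lemma fluidForcing_nonneg (hF : IsNNDistFun F) (hFt : IsNNDistFun Ft) (hq₀ : 0 ≤ q₀)
    (heMono : MonotoneOn e (Ici 0)) (heNonneg : ∀ t ≥ (0 : ℝ), 0 ≤ e t) {t : ℝ} (ht : 0 ≤ t) :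
    0 ≤ fluidForcing F Ft q₀ e t := by
  have := hF.isFiniteMeasure
  have hE : ∀ x ∈ Icc 0 t, |e (max x 0)| ≤ e t := fun x hx => by
    rw [abs_of_nonneg (heNonneg _ (le_max_right x 0)), max_eq_left hx.1]
    exact heMono hx.1 ht hx.2
  have hconv : conv F.measure (fun x => e (max x 0)) t ≤ e t * F t := by
    rw [← hF.measureReal_Icc, ← conv_const]
    exact conv_mono heMono.monotone_comp_max.measurable measurable_const hE
      (fun _ _ => (abs_of_nonneg (heNonneg t ht)).le) fun x hx => (le_abs_self _).trans (hE x hx)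
  have hsplit : max (q₀ - 1) 0 + min q₀ 1 = q₀ := by
    rcases le_total q₀ 1 with h | h <;> simp [h]
  have h₁ := mul_le_of_le_one_right (le_max_right (q₀ - 1) 0) (hF.le_one t)
  have h₂ := mul_le_of_le_one_right (le_min hq₀ zero_le_one) (hFt.le_one t)
  have h₃ := mul_le_of_le_one_right (heNonneg t ht) (hF.le_one t)
  rw [fluidForcing, max_eq_left ht]
  linarith

end Fluid

/-- Existence, uniqueness, regularity and nonnegativity of the fluid limit `q`
(equation (2.3) and Lemma B.1). -/
theorem fluidEquation_existsUnique
    (F Ft : StieltjesFunction ℝ) (hF : IsNNDistFun F) (hFt : IsNNDistFun Ft)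
    (hF0 : F 0 < 1)
    (q₀ : ℝ) (hq₀ : 0 ≤ q₀)
    (e : ℝ → ℝ) (heMono : MonotoneOn e (Set.Ici 0))
    (heNonneg : ∀ t ≥ (0 : ℝ), 0 ≤ e t) (heRcll : RCLLOnNonneg e) :
    (∃ q : ℝ → ℝ, LocBddBorel q ∧ SolvesFluid F Ft q₀ e q ∧
      RCLLOnNonneg q ∧ ∀ t ≥ (0 : ℝ), 0 ≤ q t) ∧
    ∀ q₁ q₂ : ℝ → ℝ, LocBddBorel q₁ → SolvesFluid F Ft q₀ e q₁ →
      LocBddBorel q₂ → SolvesFluid F Ft q₀ e q₂ →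
      ∀ t ≥ (0 : ℝ), q₁ t = q₂ t := by
  have := hF.isFiniteMeasure
  have hμ : F.measure.real {0} < 1 := hF.measureReal_singleton_zero ▸ hF0
  refine ⟨?_, fun q₁ q₂ hb₁ hs₁ hb₂ hs₂ t ht => ?_⟩
  · obtain ⟨q, hq, hfix⟩ := exists_isBorelRCLL_eq_renewalMap hμ lipschitzWith_max_sub_one_zero
      (isBorelRCLL_fluidForcing (Ft := Ft) (q₀ := q₀) hF heMono heRcll)
    refine ⟨q, hq.locBddBorel, solvesFluid_iff.2 hfix, hq.rcll, fun t ht => ?_⟩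
    rw [hfix t ht]
    exact add_nonneg (fluidForcing_nonneg hF hFt hq₀ heMono heNonneg ht)
      (conv_nonneg fun _ _ => le_max_right _ _)
  · simpa [max_eq_left ht] using eqOn_of_eq_renewalMap hμ lipschitzWith_max_sub_one_zero
      hb₁.measurable_comp_max hb₂.measurable_comp_max hb₁.bounded_comp_max hb₂.bounded_comp_max
      (solvesFluid_iff.1 hs₁.comp_max) (solvesFluid_iff.1 hs₂.comp_max) (mem_Ici.2 ht)
end

section
/- Let ξ be a nonnegative random variable with distribution function F(u) = P(ξ ≤ u), and write F(u−) = P(ξ < u) for the left-hand limit; let dF denote the Lebesgue–Stieltjes measure of F. Then for all 0 ≤ x ≤ y, E[∫_{(x,y]} 1{u ≤ ξ}·(1 − F(u−))^{−1} dF(u)] = F(y) − F(x), where the integrand is taken to be 0 on the set {u : F(u−) = 1} (which has dF-measure zero); equivalently, E[1{x < ξ ≤ y} − ∫_{(x,y]} 1{u ≤ ξ}·(1 − F(u−))^{−1} dF(u)] = 0. -/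
/-!
By Tonelli, the mean of the inner integral is `∫_{(x,y]} P(u ≤ ξ) (1 - F(u-))⁻¹ dF(u)`, and
`P(u ≤ ξ) = 1 - F(u-)`, so the integrand is `1` except on `{u : F(u-) = 1}`. That set consists of
the `u` whose ray `[u, ∞)` carries no mass under `dF`; it is an upper set, hence covered by
countably many such null rays together with its least element, so it is `dF`-null. The mean is
therefore `dF((x,y]) = F(y) - F(x)`.
-/

open MeasureTheory Filter Set Topology
open scoped ENNReal

theorem measure_setOf_measure_Ici_eq_zero (ν : Measure ℝ) :
    ν {u | ν (Ici u) = 0} = 0 := by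
  set S := {u | ν (Ici u) = 0}
  have hS : IsUpperSet S := fun u v huv hu => measure_mono_null (Ici_subset_Ici.2 huv) hu
  -- each `u ∈ S` lies above a rational point of `S`, unless `u` is the least element of `S`
  have hcover : S ⊆ (⋃ q : {q : ℚ // (q : ℝ) ∈ S}, Ici (q : ℝ)) ∪ (S ∩ lowerBounds S) := by
    intro u hu
    by_cases hlb : u ∈ lowerBounds S
    · exact Or.inr ⟨hu, hlb⟩
    · obtain ⟨s, hs, hsu⟩ : ∃ s ∈ S, s < u := by simpa [lowerBounds] using hlb
      obtain ⟨q, hsq, hqu⟩ := exists_rat_btwn hsu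
      exact Or.inl (mem_iUnion.2 ⟨⟨q, hS hsq.le hs⟩, hqu.le⟩)
  refine measure_mono_null hcover (measure_union_null (measure_iUnion_null fun q => q.2) ?_)
  rcases (S ∩ lowerBounds S).eq_empty_or_nonempty with h | ⟨u, hu, hlb⟩
  · rw [h, measure_empty]
  · exact measure_mono_null (fun v hv => hlb hv.1) hu

theorem ENNReal.ofReal_inv_one_sub_toReal_mul_one_sub {p : ℝ≥0∞} (hp : p < 1) :
    ENNReal.ofReal (1 - p.toReal)⁻¹ * (1 - p) = 1 := by
  have hp' : p.toReal < 1 := by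
    simpa using (ENNReal.toReal_lt_toReal hp.ne_top ENNReal.one_ne_top).2 hp
  rw [ENNReal.ofReal_inv_of_pos (by linarith), ENNReal.ofReal_sub, ENNReal.ofReal_one,
    ENNReal.ofReal_toReal hp.ne_top]
  · exact ENNReal.inv_mul_cancel (tsub_pos_of_lt hp).ne' (by simp)
  · simp

noncomputable def compensatorIntegrand {Ω : Type*} [MeasurableSpace Ω] (μ : Measure Ω)
    (ξ : Ω → ℝ) (ω : Ω) (u : ℝ) : ℝ :=
  if u ≤ ξ ω then (1 - (μ {ω' | ξ ω' < u}).toReal)⁻¹ else 0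

section
variable {Ω : Type*} [MeasurableSpace Ω] {μ : Measure Ω} [IsProbabilityMeasure μ] {ξ : Ω → ℝ}

theorem measure_le_eq_one_sub_measure_lt (hξ : Measurable ξ) (u : ℝ) :
    μ {ω | u ≤ ξ ω} = 1 - μ {ω | ξ ω < u} := by
  have hm : MeasurableSet {ω | ξ ω < u} := hξ measurableSet_Iio
  rw [← prob_compl_eq_one_sub hm]
  simp only [compl_ofPred, not_lt]

theorem ae_map_measure_lt_lt_one (hξ : Measurable ξ) :
    ∀ᵐ u ∂μ.map ξ, μ {ω | ξ ω < u} < 1 := by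
  refine measure_mono_null (fun u hu => ?_) (measure_setOf_measure_Ici_eq_zero (μ.map ξ))
  have hu : μ {ω | ξ ω < u} = 1 := le_antisymm prob_le_one (not_lt.1 hu)
  show μ.map ξ (Ici u) = 0
  rw [Measure.map_apply hξ measurableSet_Ici]
  change μ {ω | u ≤ ξ ω} = 0
  rw [measure_le_eq_one_sub_measure_lt hξ, hu, tsub_self]

omit [IsProbabilityMeasure μ] in
theorem measurable_uncurry_compensatorIntegrand (hξ : Measurable ξ) :
    Measurable (Function.uncurry (compensatorIntegrand μ ξ)) := by
  have hF : Measurable fun u : ℝ => μ {ω | ξ ω < u} :=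
    Monotone.measurable fun u v huv => measure_mono fun ω h => lt_of_lt_of_le h huv
  exact Measurable.ite (measurableSet_le measurable_snd (hξ.comp measurable_fst))
    ((measurable_const.sub hF.ennreal_toReal).inv.comp measurable_snd) measurable_const

theorem compensatorIntegrand_nonneg (ω : Ω) (u : ℝ) : 0 ≤ compensatorIntegrand μ ξ ω u := by
  unfold compensatorIntegrand
  split_ifs
  · exact inv_nonneg.2 (sub_nonneg.2 measureReal_le_one)
  · exact le_rfl

theorem lintegral_ofReal_compensatorIntegrand (hξ : Measurable ξ) {u : ℝ}
    (hu : μ {ω | ξ ω < u} < 1) :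
    ∫⁻ ω, ENNReal.ofReal (compensatorIntegrand μ ξ ω u) ∂μ = 1 := by
  have hm : MeasurableSet {ω | u ≤ ξ ω} := hξ measurableSet_Ici
  have hind : (fun ω => ENNReal.ofReal (compensatorIntegrand μ ξ ω u))
      = {ω | u ≤ ξ ω}.indicator fun _ => ENNReal.ofReal (1 - (μ {ω' | ξ ω' < u}).toReal)⁻¹ := by
    funext ω
    by_cases h : u ≤ ξ ω <;> simp [compensatorIntegrand, h]
  rw [hind, lintegral_indicator_const hm,
    measure_le_eq_one_sub_measure_lt hξ, ENNReal.ofReal_inv_one_sub_toReal_mul_one_sub hu]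

theorem lintegral_setLIntegral_ofReal_compensatorIntegrand (hξ : Measurable ξ) (s : Set ℝ) :
    ∫⁻ ω, ∫⁻ u in s, ENNReal.ofReal (compensatorIntegrand μ ξ ω u) ∂μ.map ξ ∂μ = μ.map ξ s := by
  rw [lintegral_lintegral_swap (f := fun ω u => ENNReal.ofReal (compensatorIntegrand μ ξ ω u))
    (ENNReal.measurable_ofReal.comp (measurable_uncurry_compensatorIntegrand hξ)).aemeasurable]
  calc ∫⁻ u in s, ∫⁻ ω, ENNReal.ofReal (compensatorIntegrand μ ξ ω u) ∂μ ∂μ.map ξ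
      = ∫⁻ _ in s, 1 ∂μ.map ξ := by
        refine lintegral_congr_ae (ae_restrict_of_ae ?_)
        filter_upwards [ae_map_measure_lt_lt_one hξ] with u hu
        exact lintegral_ofReal_compensatorIntegrand hξ hu
    _ = μ.map ξ s := setLIntegral_one s

theorem setIntegral_compensatorIntegrand (hξ : Measurable ξ) (ω : Ω) (s : Set ℝ) :
    ∫ u in s, compensatorIntegrand μ ξ ω u ∂μ.map ξ
      = (∫⁻ u in s, ENNReal.ofReal (compensatorIntegrand μ ξ ω u) ∂μ.map ξ).toReal :=
  integral_eq_lintegral_of_nonneg_ae (ae_of_all _ (compensatorIntegrand_nonneg ω))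
    (measurable_uncurry_compensatorIntegrand hξ).of_uncurry_left.aestronglyMeasurable

theorem measurable_setLIntegral_ofReal_compensatorIntegrand (hξ : Measurable ξ) (s : Set ℝ) :
    Measurable fun ω => ∫⁻ u in s, ENNReal.ofReal (compensatorIntegrand μ ξ ω u) ∂μ.map ξ :=
  (ENNReal.measurable_ofReal.comp
    (measurable_uncurry_compensatorIntegrand hξ)).lintegral_prod_right'

theorem integral_setIntegral_compensatorIntegrand (hξ : Measurable ξ) (s : Set ℝ) :
    ∫ ω, ∫ u in s, compensatorIntegrand μ ξ ω u ∂μ.map ξ ∂μ = (μ.map ξ).real s := by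
  have hm := measurable_setLIntegral_ofReal_compensatorIntegrand (μ := μ) hξ s
  have hfin := lintegral_setLIntegral_ofReal_compensatorIntegrand (μ := μ) hξ s
  simp_rw [setIntegral_compensatorIntegrand (μ := μ) hξ]
  rw [integral_toReal hm.aemeasurable (ae_lt_top hm (hfin ▸ measure_ne_top (μ.map ξ) s)), hfin]
  rfl

theorem integrable_setIntegral_compensatorIntegrand (hξ : Measurable ξ) (s : Set ℝ) :
    Integrable (fun ω => ∫ u in s, compensatorIntegrand μ ξ ω u ∂μ.map ξ) μ := by
  simp_rw [setIntegral_compensatorIntegrand (μ := μ) hξ]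
  exact integrable_toReal_of_lintegral_ne_top
    (measurable_setLIntegral_ofReal_compensatorIntegrand (μ := μ) hξ s).aemeasurable
    (lintegral_setLIntegral_ofReal_compensatorIntegrand (μ := μ) hξ s ▸
      measure_ne_top (μ.map ξ) s)

end

theorem compensator_mean_eq_general
    {Ω : Type*} [MeasurableSpace Ω] (μ : Measure Ω) [IsProbabilityMeasure μ]
    (ξ : Ω → ℝ) (hξm : Measurable ξ)
    (x y : ℝ) (hxy : x ≤ y) :
    (∫ ω, (∫ u in Set.Ioc x y,
        (if u ≤ ξ ω then (1 - (μ {ω' | ξ ω' < u}).toReal)⁻¹ else 0)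
          ∂(μ.map ξ)) ∂μ)
      = (μ {ω | ξ ω ≤ y}).toReal - (μ {ω | ξ ω ≤ x}).toReal ∧
    (∫ ω, ((if x < ξ ω ∧ ξ ω ≤ y then (1 : ℝ) else 0)
        - ∫ u in Set.Ioc x y,
            (if u ≤ ξ ω then (1 - (μ {ω' | ξ ω' < u}).toReal)⁻¹ else 0)
          ∂(μ.map ξ)) ∂μ) = 0 := by
  change _ = _ ∧ ∫ ω, (_ - ∫ u in Ioc x y, compensatorIntegrand μ ξ ω u ∂μ.map ξ) ∂μ = 0
  have hmean : ∫ ω, ∫ u in Ioc x y, compensatorIntegrand μ ξ ω u ∂μ.map ξ ∂μ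
      = (μ.map ξ).real (Ioc x y) := integral_setIntegral_compensatorIntegrand hξm _
  have hlaw : (μ.map ξ).real (Ioc x y) = μ.real {ω | ξ ω ≤ y} - μ.real {ω | ξ ω ≤ x} := by
    rw [← Iic_sdiff_Iic, measureReal_sdiff (Iic_subset_Iic.2 hxy) measurableSet_Iic,
      map_measureReal_apply hξm measurableSet_Iic, map_measureReal_apply hξm measurableSet_Iic]
    rfl
  have hevent : (fun ω => if x < ξ ω ∧ ξ ω ≤ y then (1 : ℝ) else 0)
      = (ξ ⁻¹' Ioc x y).indicator 1 := by
    funext ω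
    by_cases h : x < ξ ω ∧ ξ ω ≤ y <;> simp [h]
  have hind : ∫ ω, (if x < ξ ω ∧ ξ ω ≤ y then (1 : ℝ) else 0) ∂μ = (μ.map ξ).real (Ioc x y) := by
    rw [hevent, integral_indicator_one (hξm measurableSet_Ioc),
      map_measureReal_apply hξm measurableSet_Ioc]
  refine ⟨hmean.trans hlaw, ?_⟩
  have hint : Integrable (fun ω => if x < ξ ω ∧ ξ ω ≤ y then (1 : ℝ) else 0) μ :=
    hevent ▸ (integrable_const 1).indicator (hξm measurableSet_Ioc)
  rw [integral_sub hint (integrable_setIntegral_compensatorIntegrand hξm _), hind, hmean, sub_self]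

/-- The compensator identity for the distribution function of a nonnegative random
variable: `E ∫_{(x,y]} 1{u ≤ ξ} (1 - F(u-))⁻¹ dF(u) = F(y) - F(x)`, and equivalently
`E [1{x < ξ ≤ y} - ∫_{(x,y]} 1{u ≤ ξ} (1 - F(u-))⁻¹ dF(u)] = 0`.
Here `dF` is the Lebesgue–Stieltjes measure of `F`, i.e. the law `μ.map ξ` of `ξ`,
`F u = P(ξ ≤ u)`, `F(u-) = P(ξ < u)`, and the integrand vanishes on `{u : F(u-) = 1}`
(in Lean this is automatic since `(1 - 1)⁻¹ = 0⁻¹ = 0`). -/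
theorem compensator_mean_eq
    {Ω : Type*} [MeasurableSpace Ω] (μ : Measure Ω) [IsProbabilityMeasure μ]
    (ξ : Ω → ℝ) (hξm : Measurable ξ) (hξ0 : ∀ ω, 0 ≤ ξ ω)
    (x y : ℝ) (hx : 0 ≤ x) (hxy : x ≤ y) :
    (∫ ω, (∫ u in Set.Ioc x y,
        (if u ≤ ξ ω then (1 - (μ {ω' | ξ ω' < u}).toReal)⁻¹ else 0)
          ∂(μ.map ξ)) ∂μ)
      = (μ {ω | ξ ω ≤ y}).toReal - (μ {ω | ξ ω ≤ x}).toReal ∧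
    (∫ ω, ((if x < ξ ω ∧ ξ ω ≤ y then (1 : ℝ) else 0)
        - ∫ u in Set.Ioc x y,
            (if u ≤ ξ ω then (1 - (μ {ω' | ξ ω' < u}).toReal)⁻¹ else 0)
          ∂(μ.map ξ)) ∂μ) = 0 :=
  compensator_mean_eq_general μ ξ hξm x y hxy
end

section
/- Let ξ be a nonnegative random variable with distribution function F(u) = P(ξ ≤ u), and write F(u−) = P(ξ < u); let dF denote the Lebesgue–Stieltjes measure of F. Then for all 0 ≤ x ≤ y, E[(1{x < ξ ≤ y} − ∫_{(x,y]} 1{u ≤ ξ}·(1 − F(u−))^{−1} dF(u))²] = E[∫_{(x,y]} 1{u ≤ ξ}·(1 − F(u))·(1 − F(u−))^{−2} dF(u)], where the integrands are taken to be 0 on the set {u : F(u−) = 1} (which has dF-measure zero), and both sides are finite. -/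
/-!
Write `ν` for the law of `ξ`, `s u = ν[u, ∞)⁻¹`, `m = ν|_S` for the window `S = (x, y]`, and
`H t = ∫_{u ≤ t} s dm`, `G t = ∫_{u ≤ t} ν(u, ∞) s² dm`. Tonelli turns each expectation over
`t ∼ ν` into an integral over `m`, and `s u · ν[u, ∞) = 1` for `ν`-a.e. `u` collapses it:
`E[1_S H] = ∫ s(u) m[u, ∞) dm`, `E[H²] = E[1_S H] + ∫ s(u) m(u, ∞) dm` (integrate `H` against
`H dν`) and `E[G] = ∫ s(u) ν(u, ∞) dm`. Expanding the square, the left side is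
`ν S - ∫ s(u) m{u} dm`, which is `E[G]` because `m{u} + ν(u, ∞) = ν[u, ∞)` on `S`.
-/

open MeasureTheory Set
open scoped ENNReal

theorem lintegral_setLIntegral_Iic {m ρ : Measure ℝ} [SFinite m] [SFinite ρ]
    {g : ℝ → ℝ≥0∞} (hg : Measurable g) :
    ∫⁻ t, ∫⁻ u in Iic t, g u ∂m ∂ρ = ∫⁻ u, g u * ρ (Ici u) ∂m := by
  have hle : MeasurableSet {p : ℝ × ℝ | p.2 ≤ p.1} := measurableSet_le measurable_snd measurable_fst
  calc ∫⁻ t, ∫⁻ u in Iic t, g u ∂m ∂ρ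
      = ∫⁻ t, ∫⁻ u, {p : ℝ × ℝ | p.2 ≤ p.1}.indicator (fun p => g p.2) (t, u) ∂m ∂ρ := by
        simp_rw [← lintegral_indicator measurableSet_Iic]; rfl
    _ = ∫⁻ u, ∫⁻ t, {p : ℝ × ℝ | p.2 ≤ p.1}.indicator (fun p => g p.2) (t, u) ∂ρ ∂m :=
        lintegral_lintegral_swap ((hg.comp measurable_snd).indicator hle).aemeasurable
    _ = ∫⁻ u, g u * ρ (Ici u) ∂m := by
        simp_rw [← setLIntegral_const, ← lintegral_indicator measurableSet_Ici]; rfl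

theorem measurable_setLIntegral_Iic (m : Measure ℝ) (g : ℝ → ℝ≥0∞) :
    Measurable fun t => ∫⁻ u in Iic t, g u ∂m :=
  Monotone.measurable fun _ _ hab => lintegral_mono_set (Iic_subset_Iic.2 hab)

theorem measurable_measure_Ici (ν : Measure ℝ) : Measurable fun u => ν (Ici u) :=
  Antitone.measurable fun _ _ hab => measure_mono (Ici_subset_Ici.2 hab)

theorem measurable_measure_Ioi (ν : Measure ℝ) : Measurable fun u => ν (Ioi u) :=
  Antitone.measurable fun _ _ hab => measure_mono (Ioi_subset_Ioi hab)

-- Each `t` in the null-tail set `E` has `ν E ≤ ν (E ∩ Iic t)`; integrating over `t ∈ E` and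
-- applying Tonelli bounds `ν E ^ 2` by `∫_E ν (Ici u) dν = 0`.
theorem ae_measure_Ici_ne_zero (ν : Measure ℝ) [SFinite ν] : ∀ᵐ u ∂ν, ν (Ici u) ≠ 0 := by
  set E := {u | ν (Ici u) = 0}
  have hE : MeasurableSet E := measurable_measure_Ici ν (measurableSet_singleton 0)
  have hle : ∀ t ∈ E, ν E ≤ ν (E ∩ Iic t) := fun t ht => calc
    ν E ≤ ν (E ∩ Iic t ∪ Ici t) := measure_mono fun u hu => by
          rcases le_total u t with h | h
          exacts [Or.inl ⟨hu, h⟩, Or.inr h]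
    _ ≤ ν (E ∩ Iic t) + ν (Ici t) := measure_union_le _ _
    _ = ν (E ∩ Iic t) := by rw [show ν (Ici t) = 0 from ht, add_zero]
  have hsq : ν E * ν E ≤ 0 := calc
    ν E * ν E = ∫⁻ t in E, ν E ∂ν := (setLIntegral_const E _).symm
    _ ≤ ∫⁻ t in E, ν (E ∩ Iic t) ∂ν := setLIntegral_mono' hE hle
    _ ≤ ∫⁻ t, ∫⁻ u in Iic t, E.indicator 1 u ∂ν ∂ν := by
        refine (setLIntegral_le_lintegral E _).trans (lintegral_mono fun t => ?_)
        rw [lintegral_indicator_one hE, Measure.restrict_apply hE]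
    _ = ∫⁻ u, E.indicator 1 u * ν (Ici u) ∂ν :=
        lintegral_setLIntegral_Iic (measurable_one.indicator hE)
    _ = 0 := lintegral_eq_zero_of_ae_eq_zero (ae_of_all _ fun u => by
        by_cases hu : u ∈ E
        · simp [show ν (Ici u) = 0 from hu]
        · simp [hu])
  exact measure_eq_zero_iff_ae_notMem.1 (mul_self_eq_zero.1 (nonpos_iff_eq_zero.1 hsq))

theorem measure_Ici_eq_add (μ : Measure ℝ) (u : ℝ) : μ (Ici u) = μ {u} + μ (Ioi u) := by
  rw [← Ioi_union_left, measure_union (disjoint_singleton_right.2 self_notMem_Ioi)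
    (measurableSet_singleton u), add_comm]

theorem integrable_toReal_and_integral_toReal {α : Type*} [MeasurableSpace α] {μ : Measure α}
    {f : α → ℝ≥0∞} (hf : AEMeasurable f μ) (hfin : ∫⁻ t, f t ∂μ ≠ ∞) :
    Integrable (fun t => (f t).toReal) μ ∧ ∫ t, (f t).toReal ∂μ = (∫⁻ t, f t ∂μ).toReal :=
  ⟨integrable_toReal_of_lintegral_ne_top hf hfin, integral_toReal hf (ae_lt_top' hf hfin)⟩

theorem integral_ite_le_toReal {m : Measure ℝ} {g : ℝ → ℝ≥0∞} (hg : Measurable g)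
    (hfin : ∀ᵐ u ∂m, g u ≠ ∞) (t : ℝ) :
    ∫ u, (if u ≤ t then (g u).toReal else 0) ∂m = (∫⁻ u in Iic t, g u ∂m).toReal := by
  rw [← integral_toReal hg.aemeasurable (ae_restrict_of_ae (hfin.mono fun _ => Ne.lt_top)),
    ← integral_indicator measurableSet_Iic]
  rfl

theorem integral_sq_indicator_one_sub {α : Type*} [MeasurableSpace α] {μ : Measure α}
    [IsFiniteMeasure μ] {S : Set α} (hS : MeasurableSet S) {f : α → ℝ}
    (hf : IntegrableOn f S μ) (hf2 : Integrable (fun t => f t ^ 2) μ) :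
    Integrable (fun t => (S.indicator 1 t - f t) ^ 2) μ ∧
    ∫ t, (S.indicator 1 t - f t) ^ 2 ∂μ = μ.real S - 2 * ∫ t in S, f t ∂μ + ∫ t, f t ^ 2 ∂μ := by
  have hexpand : ∀ t, (S.indicator 1 t - f t) ^ 2
      = S.indicator (fun t => 1 - 2 * f t) t + f t ^ 2 := fun t => by
    by_cases ht : t ∈ S
    · simp [ht]; ring
    · simp [ht]
  have hind : Integrable (S.indicator fun t => 1 - 2 * f t) μ :=
    IntegrableOn.integrable_indicator ((integrable_const 1).sub (hf.const_mul 2)) hS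
  simp only [hexpand]
  refine ⟨hind.add hf2, ?_⟩
  rw [integral_add hind hf2, integral_indicator hS,
    integral_sub (integrable_const (1 : ℝ)) (hf.const_mul 2), integral_const_mul,
    setIntegral_const, smul_eq_mul, mul_one]

-- With `m = ν.restrict (Ioc x y)`, `compensator ν m ξ` is `∫_{(x,y]} 1{u ≤ ξ} (1 - F(u-))⁻¹ dF(u)`,
-- except that the inverse is `∞` instead of `0` on the `ν`-null set where `ν (Ici u) = 0`.
noncomputable def compensator (ν m : Measure ℝ) (t : ℝ) : ℝ≥0∞ :=
  ∫⁻ u in Iic t, (ν (Ici u))⁻¹ ∂m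

noncomputable def predictableVariation (ν m : Measure ℝ) (t : ℝ) : ℝ≥0∞ :=
  ∫⁻ u in Iic t, ν (Ioi u) * (ν (Ici u))⁻¹ ^ 2 ∂m

section
variable {ν m : Measure ℝ} [IsFiniteMeasure ν]

theorem ae_inv_measure_Ici_mul_self (hm : m ≪ ν) : ∀ᵐ u ∂m, (ν (Ici u))⁻¹ * ν (Ici u) = 1 :=
  hm.ae_le <| (ae_measure_Ici_ne_zero ν).mono fun _ hu =>
    ENNReal.inv_mul_cancel hu (measure_ne_top ν _)

theorem lintegral_inv_measure_Ici_mul_le (hm : m ≪ ν) {f : ℝ → ℝ≥0∞}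
    (hf : ∀ u, f u ≤ ν (Ici u)) : ∫⁻ u, (ν (Ici u))⁻¹ * f u ∂m ≤ m univ := by
  rw [← lintegral_one]
  refine lintegral_mono_ae ?_
  filter_upwards [ae_inv_measure_Ici_mul_self hm] with u hu
  calc (ν (Ici u))⁻¹ * f u ≤ (ν (Ici u))⁻¹ * ν (Ici u) := by gcongr; exact hf u
    _ = 1 := hu

variable [SFinite m]

theorem lintegral_compensator_sq (hm : m ≪ ν) :
    ∫⁻ t, compensator ν m t ^ 2 ∂ν
      = ∫⁻ u, compensator ν m u ∂m + ∫⁻ u, (ν (Ici u))⁻¹ * m (Ioi u) ∂m := by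
  set s := fun u => (ν (Ici u))⁻¹
  have hs : Measurable s := (measurable_measure_Ici ν).inv
  have hH : Measurable (compensator ν m) := measurable_setLIntegral_Iic m s
  have htail : ∀ u, ∫⁻ t in Ici u, compensator ν m t ∂ν = ∫⁻ v, s v * ν (Ici (v ⊔ u)) ∂m :=
    fun u => by
      simp only [compensator]
      rw [lintegral_setLIntegral_Iic hs]
      simp_rw [Measure.restrict_apply measurableSet_Ici, Ici_inter_Ici]
  -- `s u * s v * ν (Ici (v ⊔ u))` is `s v` for `v ≤ u` and `s u` for `v > u`, since
  -- `s w * ν (Ici w) = 1` almost everywhere.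
  have hsplit : ∀ᵐ u ∂m,
      s u * ∫⁻ t in Ici u, compensator ν m t ∂ν = compensator ν m u + s u * m (Ioi u) := by
    filter_upwards [ae_inv_measure_Ici_mul_self hm] with u hu
    have hmeas : Measurable fun v => s v * ν (Ici (v ⊔ u)) :=
      hs.mul ((measurable_measure_Ici ν).comp (measurable_id.sup_const u))
    rw [htail, ← lintegral_const_mul _ hmeas]
    calc ∫⁻ v, s u * (s v * ν (Ici (v ⊔ u))) ∂m
        = ∫⁻ v, (Iic u).indicator s v + (Ioi u).indicator (fun _ => s u) v ∂m := by
          refine lintegral_congr_ae ?_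
          filter_upwards [ae_inv_measure_Ici_mul_self hm] with v hv
          rcases le_or_gt v u with h | h
          · rw [sup_eq_right.2 h, mul_left_comm, hu, mul_one, indicator_of_mem (mem_Iic.2 h),
              indicator_of_notMem (notMem_Ioi.2 h), add_zero]
          · rw [sup_eq_left.2 h.le, hv, mul_one, indicator_of_notMem (notMem_Iic.2 h),
              indicator_of_mem (mem_Ioi.2 h), zero_add]
      _ = compensator ν m u + s u * m (Ioi u) := by
          rw [lintegral_add_left (hs.indicator measurableSet_Iic),
            lintegral_indicator measurableSet_Iic, lintegral_indicator measurableSet_Ioi,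
            setLIntegral_const]
          rfl
  calc ∫⁻ t, compensator ν m t ^ 2 ∂ν
      = ∫⁻ t, compensator ν m t ∂(ν.withDensity (compensator ν m)) := by
        rw [lintegral_withDensity_eq_lintegral_mul _ hH hH]
        simp only [Pi.mul_apply, sq]
    _ = ∫⁻ u, s u * ∫⁻ t in Ici u, compensator ν m t ∂ν ∂m := by
        simp only [compensator]
        rw [lintegral_setLIntegral_Iic hs]
        simp_rw [withDensity_apply _ measurableSet_Ici]
        rfl
    _ = ∫⁻ u, compensator ν m u + s u * m (Ioi u) ∂m := lintegral_congr_ae hsplit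
    _ = _ := lintegral_add_left hH _

theorem lintegral_predictableVariation (hm : m ≪ ν) :
    ∫⁻ t, predictableVariation ν m t ∂ν = ∫⁻ u, (ν (Ici u))⁻¹ * ν (Ioi u) ∂m := by
  have hs : Measurable fun u => (ν (Ici u))⁻¹ := (measurable_measure_Ici ν).inv
  have hmeas : Measurable fun u => ν (Ioi u) * (ν (Ici u))⁻¹ ^ 2 :=
    (measurable_measure_Ioi ν).mul (hs.pow_const 2)
  simp only [predictableVariation]
  rw [lintegral_setLIntegral_Iic hmeas]
  refine lintegral_congr_ae ?_
  filter_upwards [ae_inv_measure_Ici_mul_self hm] with u hu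
  calc ν (Ioi u) * (ν (Ici u))⁻¹ ^ 2 * ν (Ici u)
      = (ν (Ici u))⁻¹ * ν (Ioi u) * ((ν (Ici u))⁻¹ * ν (Ici u)) := by ring
    _ = (ν (Ici u))⁻¹ * ν (Ioi u) := by rw [hu, mul_one]

end

section
variable {ν : Measure ℝ} [IsFiniteMeasure ν] {S : Set ℝ}

theorem setLIntegral_compensator_add_lintegral_predictableVariation (hS : MeasurableSet S) :
    ∫⁻ t in S, compensator ν (ν.restrict S) t ∂ν
        + ∫⁻ t, predictableVariation ν (ν.restrict S) t ∂ν
      = ν S + ∫⁻ u in S, (ν (Ici u))⁻¹ * ν.restrict S (Ioi u) ∂ν := by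
  have hm : ν.restrict S ≪ ν := Measure.absolutelyContinuous_of_le Measure.restrict_le_self
  have hs : Measurable fun u => (ν (Ici u))⁻¹ := (measurable_measure_Ici ν).inv
  have hmeas : Measurable fun u => (ν (Ici u))⁻¹ * ν.restrict S (Ici u) :=
    hs.mul (measurable_measure_Ici _)
  simp only [compensator]
  rw [lintegral_predictableVariation hm, lintegral_setLIntegral_Iic hs,
    ← lintegral_add_left hmeas, ← setLIntegral_one,
    ← lintegral_add_left measurable_const]
  refine lintegral_congr_ae ?_
  filter_upwards [ae_restrict_mem hS, ae_inv_measure_Ici_mul_self hm] with u huS hu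
  have hatom : ν.restrict S {u} = ν {u} := by
    rw [Measure.restrict_apply (measurableSet_singleton u), singleton_inter_of_mem huS]
  rw [measure_Ici_eq_add (ν.restrict S), hatom, ← hu, measure_Ici_eq_add ν]
  ring

theorem integral_sq_indicator_sub_compensator (hS : MeasurableSet S) :
    Integrable (fun t => (S.indicator 1 t - (compensator ν (ν.restrict S) t).toReal) ^ 2) ν ∧
    Integrable (fun t => (predictableVariation ν (ν.restrict S) t).toReal) ν ∧
    ∫ t, (S.indicator 1 t - (compensator ν (ν.restrict S) t).toReal) ^ 2 ∂ν
      = ∫ t, (predictableVariation ν (ν.restrict S) t).toReal ∂ν := by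
  have hsum := setLIntegral_compensator_add_lintegral_predictableVariation (ν := ν) hS
  set H := compensator ν (ν.restrict S)
  have hm : ν.restrict S ≪ ν := Measure.absolutelyContinuous_of_le Measure.restrict_le_self
  have hH : Measurable H := measurable_setLIntegral_Iic _ _
  have hG : Measurable (predictableVariation ν (ν.restrict S)) := measurable_setLIntegral_Iic _ _
  have hsq : ∫⁻ t, H t ^ 2 ∂ν = ∫⁻ t in S, H t ∂ν
      + ∫⁻ u in S, (ν (Ici u))⁻¹ * ν.restrict S (Ioi u) ∂ν := lintegral_compensator_sq hm
  have hb : ∫⁻ u in S, (ν (Ici u))⁻¹ * ν.restrict S (Ioi u) ∂ν ≠ ∞ :=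
    ne_top_of_le_ne_top (measure_ne_top (ν.restrict S) univ) <|
      lintegral_inv_measure_Ici_mul_le hm fun u =>
        (Measure.restrict_apply_le S _).trans (measure_mono Ioi_subset_Ici_self)
  obtain ⟨hX, hc⟩ := ENNReal.add_ne_top.1 (hsum ▸ ENNReal.add_ne_top.2 ⟨measure_ne_top ν S, hb⟩)
  obtain ⟨hH_int, hH_eq⟩ := integrable_toReal_and_integral_toReal hH.aemeasurable.restrict hX
  obtain ⟨hH2_int, hH2_eq⟩ := integrable_toReal_and_integral_toReal (hH.pow_const 2).aemeasurable
    (by rw [hsq]; exact ENNReal.add_ne_top.2 ⟨hX, hb⟩)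
  obtain ⟨hG_int, hG_eq⟩ := integrable_toReal_and_integral_toReal hG.aemeasurable hc
  simp only [ENNReal.toReal_pow] at hH2_int hH2_eq
  obtain ⟨hL_int, hL_eq⟩ := integral_sq_indicator_one_sub hS hH_int hH2_int
  refine ⟨hL_int, hG_int, ?_⟩
  have hsum_real := congrArg ENNReal.toReal hsum
  rw [ENNReal.toReal_add hX hc, ENNReal.toReal_add (measure_ne_top ν S) hb] at hsum_real
  rw [hL_eq, hH_eq, hH2_eq, hG_eq, hsq, ENNReal.toReal_add hX hb, Measure.real]
  linarith

end

section
variable {ν : Measure ℝ} [IsProbabilityMeasure ν]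

theorem one_sub_toReal_measure_Iio (u : ℝ) : 1 - (ν (Iio u)).toReal = (ν (Ici u)).toReal := by
  rw [← compl_Iio, prob_compl_eq_one_sub measurableSet_Iio,
    ENNReal.toReal_sub_of_le prob_le_one ENNReal.one_ne_top, ENNReal.toReal_one]

theorem one_sub_toReal_measure_Iic (u : ℝ) : 1 - (ν (Iic u)).toReal = (ν (Ioi u)).toReal := by
  rw [← compl_Iic, prob_compl_eq_one_sub measurableSet_Iic,
    ENNReal.toReal_sub_of_le prob_le_one ENNReal.one_ne_top, ENNReal.toReal_one]

theorem setIntegral_ite_eq_compensator_toReal (S : Set ℝ) (t : ℝ) :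
    ∫ u in S, (if u ≤ t then (1 - (ν (Iio u)).toReal)⁻¹ else 0) ∂ν
      = (compensator ν (ν.restrict S) t).toReal := by
  simp only [one_sub_toReal_measure_Iio, ← ENNReal.toReal_inv]
  refine integral_ite_le_toReal (measurable_measure_Ici ν).inv ?_ t
  exact ae_restrict_of_ae <| (ae_measure_Ici_ne_zero ν).mono fun _ => ENNReal.inv_ne_top.2

theorem setIntegral_ite_eq_predictableVariation_toReal (S : Set ℝ) (t : ℝ) :
    ∫ u in S, (if u ≤ t then
        (1 - (ν (Iic u)).toReal) * ((1 - (ν (Iio u)).toReal)⁻¹) ^ 2 else 0) ∂ν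
      = (predictableVariation ν (ν.restrict S) t).toReal := by
  simp only [one_sub_toReal_measure_Iio, one_sub_toReal_measure_Iic, ← ENNReal.toReal_inv,
    ← ENNReal.toReal_pow, ← ENNReal.toReal_mul]
  refine integral_ite_le_toReal
    ((measurable_measure_Ioi ν).mul ((measurable_measure_Ici ν).inv.pow_const 2)) ?_ t
  exact ae_restrict_of_ae <| (ae_measure_Ici_ne_zero ν).mono fun _ hu =>
    ENNReal.mul_ne_top (measure_ne_top ν _) (ENNReal.pow_ne_top (ENNReal.inv_ne_top.2 hu))

end

-- The integrands vanish on `{u | F(u-) = 1}` because `(0 : ℝ)⁻¹ = 0`.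
theorem compensator_secondMoment_eq_general
    {Ω : Type*} [MeasurableSpace Ω] (μ : Measure Ω) [IsProbabilityMeasure μ]
    (ξ : Ω → ℝ) (hξm : Measurable ξ)
    (x y : ℝ) :
    Integrable (fun ω =>
      ((if x < ξ ω ∧ ξ ω ≤ y then (1 : ℝ) else 0)
        - ∫ u in Set.Ioc x y,
            (if u ≤ ξ ω then (1 - (μ {ω' | ξ ω' < u}).toReal)⁻¹ else 0)
          ∂(μ.map ξ)) ^ 2) μ ∧
    Integrable (fun ω =>
      ∫ u in Set.Ioc x y,
        (if u ≤ ξ ω then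
            (1 - (μ {ω' | ξ ω' ≤ u}).toReal) * ((1 - (μ {ω' | ξ ω' < u}).toReal)⁻¹) ^ 2
          else 0) ∂(μ.map ξ)) μ ∧
    (∫ ω, ((if x < ξ ω ∧ ξ ω ≤ y then (1 : ℝ) else 0)
        - ∫ u in Set.Ioc x y,
            (if u ≤ ξ ω then (1 - (μ {ω' | ξ ω' < u}).toReal)⁻¹ else 0)
          ∂(μ.map ξ)) ^ 2 ∂μ)
      = ∫ ω, (∫ u in Set.Ioc x y,
          (if u ≤ ξ ω then
              (1 - (μ {ω' | ξ ω' ≤ u}).toReal) * ((1 - (μ {ω' | ξ ω' < u}).toReal)⁻¹) ^ 2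
            else 0) ∂(μ.map ξ)) ∂μ := by
  set ν := μ.map ξ
  have : IsProbabilityMeasure ν := Measure.isProbabilityMeasure_map hξm.aemeasurable
  have hlt : ∀ u, μ {ω | ξ ω < u} = ν (Iio u) := fun u =>
    (Measure.map_apply hξm measurableSet_Iio).symm
  have hle : ∀ u, μ {ω | ξ ω ≤ u} = ν (Iic u) := fun u =>
    (Measure.map_apply hξm measurableSet_Iic).symm
  have hind : ∀ t, (if x < t ∧ t ≤ y then (1 : ℝ) else 0) = (Ioc x y).indicator 1 t := fun t => by
    simp [indicator, mem_Ioc]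
  simp only [hlt, hle, hind, setIntegral_ite_eq_compensator_toReal,
    setIntegral_ite_eq_predictableVariation_toReal]
  obtain ⟨hL, hR, heq⟩ := integral_sq_indicator_sub_compensator (ν := ν) measurableSet_Ioc
  refine ⟨hL.comp_measurable hξm, hR.comp_measurable hξm, ?_⟩
  rw [← integral_map hξm.aemeasurable hL.1, ← integral_map hξm.aemeasurable hR.1, heq]

/-- The second-moment identity for the compensated indicator of a nonnegative random
variable: the expectation of the square of
`1{x < ξ ≤ y} - ∫_{(x,y]} 1{u ≤ ξ} (1 - F(u-))⁻¹ dF(u)` equals the expectation of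
`∫_{(x,y]} 1{u ≤ ξ} (1 - F(u)) (1 - F(u-))⁻² dF(u)`, and both sides are finite.
Here `dF` is the Lebesgue–Stieltjes measure of `F`, i.e. the law `μ.map ξ` of `ξ`,
`F u = P(ξ ≤ u)`, `F(u-) = P(ξ < u)`, and the integrands vanish on `{u : F(u-) = 1}`
(in Lean this is automatic since `(1 - 1)⁻¹ = 0⁻¹ = 0`). -/
theorem compensator_secondMoment_eq
    {Ω : Type*} [MeasurableSpace Ω] (μ : Measure Ω) [IsProbabilityMeasure μ]
    (ξ : Ω → ℝ) (hξm : Measurable ξ) (hξ0 : ∀ ω, 0 ≤ ξ ω)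
    (x y : ℝ) (hx : 0 ≤ x) (hxy : x ≤ y) :
    Integrable (fun ω =>
      ((if x < ξ ω ∧ ξ ω ≤ y then (1 : ℝ) else 0)
        - ∫ u in Set.Ioc x y,
            (if u ≤ ξ ω then (1 - (μ {ω' | ξ ω' < u}).toReal)⁻¹ else 0)
          ∂(μ.map ξ)) ^ 2) μ ∧
    Integrable (fun ω =>
      ∫ u in Set.Ioc x y,
        (if u ≤ ξ ω then
            (1 - (μ {ω' | ξ ω' ≤ u}).toReal) * ((1 - (μ {ω' | ξ ω' < u}).toReal)⁻¹) ^ 2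
          else 0) ∂(μ.map ξ)) μ ∧
    (∫ ω, ((if x < ξ ω ∧ ξ ω ≤ y then (1 : ℝ) else 0)
        - ∫ u in Set.Ioc x y,
            (if u ≤ ξ ω then (1 - (μ {ω' | ξ ω' < u}).toReal)⁻¹ else 0)
          ∂(μ.map ξ)) ^ 2 ∂μ)
      = ∫ ω, (∫ u in Set.Ioc x y,
          (if u ≤ ξ ω then
              (1 - (μ {ω' | ξ ω' ≤ u}).toReal) * ((1 - (μ {ω' | ξ ω' < u}).toReal)⁻¹) ^ 2
            else 0) ∂(μ.map ξ)) ∂μ :=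
  compensator_secondMoment_eq_general μ ξ hξm x y
end

section
/- Let S and S′ be metric spaces, let S₀ be a Borel subset of S, and let fₙ and f be maps from S to S′ such that f is Borel measurable and fₙ(xₙ) → f(x) in S′ whenever xₙ → x in S with x ∈ S₀. Let Xₙ : Ω → S be arbitrary maps converging in distribution (in the Hoffmann–Jørgensen sense) to a Borel measurable map X : Ω → S all of whose values lie in S₀. Then fₙ(Xₙ) converges in distribution (in the Hoffmann–Jørgensen sense) to f(X). -/
open MeasureTheory Filter Set Topology

/-- The outer expectation `E* ξ`: the infimum of `E ζ` over all integrable random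
variables `ζ ≥ ξ` almost surely. -/
noncomputable def outerExp {Ω : Type*} [MeasurableSpace Ω] (μ : Measure Ω)
    (ξ : Ω → ℝ) : ℝ :=
  sInf {c : ℝ | ∃ ζ : Ω → ℝ, Measurable ζ ∧ Integrable ζ μ ∧
    (∀ᵐ ω ∂μ, ξ ω ≤ ζ ω) ∧ c = ∫ ω, ζ ω ∂μ}

/-- Hoffmann–Jørgensen convergence in distribution of (possibly nonmeasurable) maps
`Xₙ` to a measurable map `Y`: `E* f(Xₙ) → E f(Y)` for every bounded continuous `f`. -/
def TendstoInDistHJ {Ω S : Type*} [MeasurableSpace Ω] [TopologicalSpace S]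
    (μ : Measure Ω) (X : ℕ → Ω → S) (Y : Ω → S) : Prop :=
  ∀ f : S → ℝ, Continuous f → (∃ C : ℝ, ∀ x : S, |f x| ≤ C) →
    Tendsto (fun n => outerExp μ fun ω => f (X n ω)) atTop
      (nhds (∫ ω, f (Y ω) ∂μ))

/-!
Hoffmann–Jørgensen convergence `Xₙ ⇝ X` is equivalent to the closed-set portmanteau condition
`limsup P*(Xₙ ∈ F) ≤ P(X ∈ F)` for every closed `F`. One direction approximates `1_F` from
above by bounded continuous functions; the other slices a bounded continuous `g` along finitely
many closed superlevel sets, using only that `E*` is monotone and sublinear on bounded functions.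

The condition passes from `Xₙ` to `fₙ(Xₙ)`: if `fₙ(Xₙ) ∈ F` with `n ≥ k`, then `Xₙ` lies in
the closed set `K_k = closure (⋃_{m ≥ k} fₘ⁻¹ F)`. The sets `K_k` decrease, and the extended
continuity of `fₙ` at points of `S₀` gives `⋂ₖ K_k ∩ S₀ ⊆ f⁻¹ F`, so that
`P(X ∈ K_k) ↓ P(X ∈ ⋂ₖ K_k) ≤ P(f(X) ∈ F)`.
-/

theorem bddBelow_range_of_abs_le {α : Type*} {ξ : α → ℝ} {C : ℝ} (h : ∀ a, |ξ a| ≤ C) :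
    BddBelow (range ξ) :=
  ⟨-C, by rintro _ ⟨a, rfl⟩; exact neg_le_of_abs_le (h a)⟩

theorem bddAbove_range_of_abs_le {α : Type*} {ξ : α → ℝ} {C : ℝ} (h : ∀ a, |ξ a| ≤ C) :
    BddAbove (range ξ) :=
  ⟨C, by rintro _ ⟨a, rfl⟩; exact le_of_abs_le (h a)⟩

theorem BddBelow.range_finsetSum {ι α : Type*} (s : Finset ι) {f : ι → α → ℝ}
    (hf : ∀ i, BddBelow (range (f i))) : BddBelow (range fun a => ∑ i ∈ s, f i a) := by
  classical
  induction s using Finset.induction_on with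
  | empty => exact bddBelow_range_of_abs_le fun _ => abs_zero.le
  | insert i s hi ih => simpa only [Finset.sum_insert hi] using (hf i).range_add ih

theorem BddAbove.range_finsetSum {ι α : Type*} (s : Finset ι) {f : ι → α → ℝ}
    (hf : ∀ i, BddAbove (range (f i))) : BddAbove (range fun a => ∑ i ∈ s, f i a) := by
  classical
  induction s using Finset.induction_on with
  | empty => exact bddAbove_range_of_abs_le fun _ => abs_zero.le
  | insert i s hi ih => simpa only [Finset.sum_insert hi] using (hf i).range_add ih

section OuterExpectation

variable {Ω : Type*} [MeasurableSpace Ω] {μ : Measure Ω}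

theorem outerExp_le_integral [IsFiniteMeasure μ] {ξ ζ : Ω → ℝ} (hξ : BddBelow (range ξ))
    (hζm : Measurable ζ) (hζ : Integrable ζ μ) (hle : ∀ᵐ ω ∂μ, ξ ω ≤ ζ ω) :
    outerExp μ ξ ≤ ∫ ω, ζ ω ∂μ := by
  obtain ⟨c, hc⟩ := hξ
  refine csInf_le ⟨μ.real univ * c, ?_⟩ ⟨ζ, hζm, hζ, hle, rfl⟩
  rintro _ ⟨η, -, hη, hξη, rfl⟩
  calc μ.real univ * c = ∫ _, c ∂μ := by simp
    _ ≤ ∫ ω, η ω ∂μ :=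
      integral_mono_ae (integrable_const c) hη (hξη.mono fun ω h => (hc ⟨ω, rfl⟩).trans h)

theorem le_outerExp [IsFiniteMeasure μ] {ξ : Ω → ℝ} {c : ℝ} (hξ : BddAbove (range ξ))
    (h : ∀ ζ : Ω → ℝ, Measurable ζ → Integrable ζ μ → (∀ᵐ ω ∂μ, ξ ω ≤ ζ ω) →
      c ≤ ∫ ω, ζ ω ∂μ) :
    c ≤ outerExp μ ξ := by
  obtain ⟨C, hC⟩ := hξ
  refine le_csInf ⟨_, fun _ => C, measurable_const, integrable_const C,
    ae_of_all _ fun ω => hC ⟨ω, rfl⟩, rfl⟩ ?_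
  rintro _ ⟨ζ, hζm, hζ, hle, rfl⟩
  exact h ζ hζm hζ hle

theorem outerExp_mono [IsFiniteMeasure μ] {ξ η : Ω → ℝ} (hξ : BddBelow (range ξ))
    (hη : BddAbove (range η)) (h : ξ ≤ η) : outerExp μ ξ ≤ outerExp μ η :=
  le_outerExp hη fun _ hζm hζ hle =>
    outerExp_le_integral hξ hζm hζ (hle.mono fun ω hω => (h ω).trans hω)

theorem outerExp_add_le [IsFiniteMeasure μ] {ξ η : Ω → ℝ} (hξ : BddBelow (range ξ))
    (hξ' : BddAbove (range ξ)) (hη : BddBelow (range η)) (hη' : BddAbove (range η)) :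
    outerExp μ (fun ω => ξ ω + η ω) ≤ outerExp μ ξ + outerExp μ η := by
  -- take the infimum of `E*(ξ + η) ≤ ∫ ζ₁ + ∫ ζ₂` over the envelopes `ζ₁ ≥ ξ`, then `ζ₂ ≥ η`
  rw [← sub_le_iff_le_add]
  refine le_outerExp hξ' fun ζ₁ hζ₁m hζ₁ hle₁ => ?_
  rw [sub_le_comm]
  refine le_outerExp hη' fun ζ₂ hζ₂m hζ₂ hle₂ => ?_
  rw [sub_le_iff_le_add', ← integral_add hζ₁ hζ₂]
  exact outerExp_le_integral (hξ.range_add hη) (hζ₁m.add hζ₂m) (hζ₁.add hζ₂)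
    (hle₁.mp (hle₂.mono fun ω h₂ h₁ => add_le_add h₁ h₂))

theorem outerExp_const_mul_le [IsFiniteMeasure μ] {ξ : Ω → ℝ} {a : ℝ} (ha : 0 < a)
    (hξ : BddBelow (range ξ)) (hξ' : BddAbove (range ξ)) :
    outerExp μ (fun ω => a * ξ ω) ≤ a * outerExp μ ξ := by
  rw [← div_le_iff₀' ha]
  refine le_outerExp hξ' fun ζ hζm hζ hle => ?_
  rw [div_le_iff₀' ha, ← integral_const_mul]
  exact outerExp_le_integral (hξ.range_comp_left (monotone_mul_left_of_nonneg ha.le))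
    (hζm.const_mul a) (hζ.const_mul a) (hle.mono fun ω h => by gcongr)

theorem outerExp_sum_le [IsFiniteMeasure μ] {ι : Type*} (s : Finset ι) {ξ : ι → Ω → ℝ}
    (hξ : ∀ i, BddBelow (range (ξ i))) (hξ' : ∀ i, BddAbove (range (ξ i))) :
    outerExp μ (fun ω => ∑ i ∈ s, ξ i ω) ≤ ∑ i ∈ s, outerExp μ (ξ i) := by
  classical
  induction s using Finset.induction_on with
  | empty =>
    simpa using outerExp_le_integral (μ := μ) (bddBelow_range_of_abs_le fun _ => abs_zero.le)
      (ζ := fun _ => 0) measurable_const (integrable_const 0) (ae_of_all _ fun _ => le_rfl)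
  | insert i s hi ih =>
    simp only [Finset.sum_insert hi]
    exact (outerExp_add_le (hξ i) (hξ' i) (.range_finsetSum s hξ)
      (.range_finsetSum s hξ')).trans (add_le_add_right ih _)

theorem outerExp_const [IsProbabilityMeasure μ] (c : ℝ) : outerExp μ (fun _ => c) = c := by
  refine le_antisymm ?_ (le_outerExp (bddAbove_range_of_abs_le fun _ => le_rfl)
    fun ζ _ hζ hle => by simpa using integral_mono_ae (integrable_const c) hζ hle)
  simpa using outerExp_le_integral (μ := μ) (bddBelow_range_of_abs_le fun _ => le_rfl)
    measurable_const (integrable_const c) (ae_of_all _ fun _ => le_rfl)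

theorem outerExp_add_const [IsProbabilityMeasure μ] {ξ : Ω → ℝ} (hξ : BddBelow (range ξ))
    (hξ' : BddAbove (range ξ)) (c : ℝ) :
    outerExp μ (fun ω => ξ ω + c) = outerExp μ ξ + c := by
  have hc : BddBelow (range fun _ : Ω => c) := bddBelow_range_of_abs_le fun _ => le_rfl
  have hc' : BddAbove (range fun _ : Ω => c) := bddAbove_range_of_abs_le fun _ => le_rfl
  refine le_antisymm (by simpa [outerExp_const] using outerExp_add_le (μ := μ) hξ hξ' hc hc') ?_
  have := outerExp_add_le (μ := μ) (hξ.range_add hc) (hξ'.range_add hc')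
    (bddBelow_range_of_abs_le fun _ => le_rfl) (bddAbove_range_of_abs_le fun _ => le_rfl)
    (η := fun _ => -c)
  simp only [add_neg_cancel_right, outerExp_const] at this
  linarith

theorem neg_outerExp_neg_le [IsProbabilityMeasure μ] {ξ : Ω → ℝ} (hξ : BddBelow (range ξ))
    (hξ' : BddAbove (range ξ)) : -outerExp μ (fun ω => -ξ ω) ≤ outerExp μ ξ := by
  obtain ⟨c, hc⟩ := hξ
  obtain ⟨C, hC⟩ := hξ'
  have := outerExp_add_le (μ := μ) ⟨c, hc⟩ ⟨C, hC⟩ (η := fun ω => -ξ ω)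
    ⟨-C, by rintro _ ⟨ω, rfl⟩; exact neg_le_neg (hC ⟨ω, rfl⟩)⟩
    ⟨-c, by rintro _ ⟨ω, rfl⟩; exact neg_le_neg (hc ⟨ω, rfl⟩)⟩
  simp only [add_neg_cancel, outerExp_const] at this
  linarith

end OuterExpectation

noncomputable def outerProb {Ω : Type*} [MeasurableSpace Ω] (μ : Measure Ω) (A : Set Ω) : ℝ :=
  outerExp μ (A.indicator 1)

theorem bddBelow_range_indicator_one {α : Type*} (A : Set α) :
    BddBelow (range (A.indicator (1 : α → ℝ))) :=
  ⟨0, by rintro _ ⟨x, rfl⟩; exact indicator_nonneg (fun _ _ => zero_le_one) x⟩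

theorem bddAbove_range_indicator_one {α : Type*} (A : Set α) :
    BddAbove (range (A.indicator (1 : α → ℝ))) :=
  ⟨1, by rintro _ ⟨x, rfl⟩; exact indicator_le_self' (fun _ _ => zero_le_one) x⟩

theorem outerProb_mono {Ω : Type*} [MeasurableSpace Ω] {μ : Measure Ω} [IsFiniteMeasure μ]
    {A B : Set Ω} (h : A ⊆ B) : outerProb μ A ≤ outerProb μ B :=
  outerExp_mono (bddBelow_range_indicator_one A) (bddAbove_range_indicator_one B)
    (indicator_le_indicator_of_subset h fun _ => zero_le_one)

theorem le_mul_sum_indicator_Ici_le {h t : ℝ} (hh : 0 < h) (ht : 0 ≤ t) {N : ℕ}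
    (htN : t ≤ N * h) :
    t ≤ h * ∑ i ∈ Finset.range N, (Ici (i * h)).indicator 1 t ∧
      h * ∑ i ∈ Finset.range N, (Ici (i * h)).indicator 1 t ≤ t + h := by
  set k := ⌊t / h⌋₊
  have hsum : ∑ i ∈ Finset.range N, (Ici ((i : ℝ) * h)).indicator (1 : ℝ → ℝ) t =
      (min N (k + 1) : ℕ) := by
    have hfilter : (Finset.range N).filter (fun i : ℕ => (i : ℝ) * h ≤ t) =
        Finset.range (min N (k + 1)) := by
      ext i
      rw [Finset.mem_filter, ← le_div_iff₀ hh, ← Nat.le_floor_iff (div_nonneg ht hh.le)]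
      simp only [Finset.mem_range, lt_min_iff, Nat.lt_succ_iff, k]
    simp only [indicator_apply, Set.mem_Ici, Pi.one_apply, Finset.sum_boole, hfilter,
      Finset.card_range]
  have hk : (k : ℝ) ≤ t / h := Nat.floor_le (div_nonneg ht hh.le)
  have hk' : t / h < k + 1 := Nat.lt_floor_add_one _
  rw [hsum, Nat.cast_min, mul_min_of_nonneg _ _ hh.le]
  push_cast
  constructor
  · rw [div_lt_iff₀ hh] at hk'
    exact le_min (by linarith) (by linarith)
  · rw [le_div_iff₀ hh] at hk
    exact (min_le_right _ _).trans (by linarith)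

def PortmanteauClosed {Ω T : Type*} [MeasurableSpace Ω] [TopologicalSpace T] (μ : Measure Ω)
    (Z : ℕ → Ω → T) (W : Ω → T) : Prop :=
  ∀ F : Set T, IsClosed F → ∀ a, μ.real (W ⁻¹' F) < a →
    ∀ᶠ n in atTop, outerProb μ (Z n ⁻¹' F) < a

theorem TendstoInDistHJ.portmanteauClosed {Ω T : Type*} [MeasurableSpace Ω] {μ : Measure Ω}
    [IsFiniteMeasure μ] [PseudoEMetricSpace T] [MeasurableSpace T] [OpensMeasurableSpace T]
    {Z : ℕ → Ω → T} {W : Ω → T}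
    (hZW : TendstoInDistHJ μ Z W) (hW : Measurable W) : PortmanteauClosed μ Z W := by
  intro F hF a ha
  have hδ : ∀ j : ℕ, (0 : ℝ) < 1 / (j + 1) := fun j => Nat.one_div_pos_of_nat
  let φ : ℕ → T → ℝ := fun j x => thickenedIndicator (hδ j) F x
  have hlim : Tendsto (fun j => ∫ ω, φ j (W ω) ∂μ) atTop (𝓝 (μ.real (W ⁻¹' F))) := by
    have := tendsto_integral_thickenedIndicator_of_isClosed (μ.map W) hF hδ
      tendsto_one_div_add_atTop_nhds_zero_nat
    rw [map_measureReal_apply hW hF.measurableSet] at this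
    exact this.congr fun j => integral_map hW.aemeasurable (by fun_prop)
  obtain ⟨j, hj⟩ := (hlim.eventually_lt_const ha).exists
  have hφ₀ : ∀ x, 0 ≤ φ j x := fun x => NNReal.coe_nonneg _
  have hφ₁ : ∀ x, φ j x ≤ 1 := fun x => by
    simpa only [φ, NNReal.coe_le_one] using thickenedIndicator_le_one (hδ j) F x
  have hφ := hZW (φ j) (by fun_prop) ⟨1, fun x => by rw [abs_of_nonneg (hφ₀ x)]; exact hφ₁ x⟩
  filter_upwards [hφ.eventually_lt_const hj] with n hn
  refine lt_of_le_of_lt (outerExp_mono (bddBelow_range_indicator_one _)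
    ⟨1, by rintro _ ⟨ω, rfl⟩; exact hφ₁ _⟩ fun ω => ?_) hn
  by_cases hω : Z n ω ∈ F
  · rw [indicator_of_mem (show ω ∈ Z n ⁻¹' F from hω)]
    simp only [Pi.one_apply, φ, thickenedIndicator_one (hδ j) F hω, NNReal.coe_one, le_refl]
  · rw [indicator_of_notMem (show ω ∉ Z n ⁻¹' F from hω)]
    exact hφ₀ _

section Portmanteau

variable {Ω T : Type*} [MeasurableSpace Ω] {μ : Measure Ω} [IsProbabilityMeasure μ]
  [TopologicalSpace T] [MeasurableSpace T] [OpensMeasurableSpace T] {Z : ℕ → Ω → T} {W : Ω → T}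

theorem PortmanteauClosed.eventually_outerExp_lt_of_nonneg (hP : PortmanteauClosed μ Z W)
    (hW : Measurable W) {g : T → ℝ} (hg : Continuous g) (hg₀ : ∀ x, 0 ≤ g x) {M : ℝ}
    (hgM : ∀ x, g x ≤ M) {a : ℝ} (ha : ∫ ω, g (W ω) ∂μ < a) :
    ∀ᶠ n in atTop, outerExp μ (fun ω => g (Z n ω)) < a := by
  set ε := a - ∫ ω, g (W ω) ∂μ with hε_def
  have hε : 0 < ε := sub_pos.2 ha
  set h := ε / 2 with hh_def
  have hh : 0 < h := half_pos hε
  set N := ⌈M / h⌉₊ + 1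
  have hN : M ≤ N * h := by
    rw [← div_le_iff₀ hh]
    exact (Nat.le_ceil _).trans (by simp [N])
  have hN₀ : (0 : ℝ) < N := by positivity
  let F : ℕ → Set T := fun i => g ⁻¹' Ici (i * h)
  have hF : ∀ i, IsClosed (F i) := fun i => isClosed_Ici.preimage hg
  have hlayer := fun x => le_mul_sum_indicator_Ici_le hh (hg₀ x) ((hgM x).trans hN)
  have hgW : Integrable (fun ω => g (W ω)) μ :=
    .of_bound (hg.measurable.comp hW).aestronglyMeasurable M
      (ae_of_all _ fun ω => by rw [Real.norm_eq_abs, abs_of_nonneg (hg₀ _)]; exact hgM _)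
  have hmeas : ∀ i, MeasurableSet (W ⁻¹' F i) := fun i => hW (hF i).measurableSet
  have hint : h * ∑ i ∈ Finset.range N, μ.real (W ⁻¹' F i) ≤ ∫ ω, g (W ω) ∂μ + h :=
    calc h * ∑ i ∈ Finset.range N, μ.real (W ⁻¹' F i)
        = ∫ ω, h * ∑ i ∈ Finset.range N, (W ⁻¹' F i).indicator 1 ω ∂μ := by
          rw [integral_const_mul, integral_finsetSum _ fun i _ =>
            (integrable_const 1).indicator (hmeas i)]
          simp only [integral_indicator_one (hmeas _)]
      _ ≤ ∫ ω, (g (W ω) + h) ∂μ :=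
          integral_mono ((integrable_finsetSum _ fun i _ =>
            (integrable_const 1).indicator (hmeas i)).const_mul h)
            (hgW.add (integrable_const h)) fun ω => (hlayer (W ω)).2
      _ = ∫ ω, g (W ω) ∂μ + h := by simp [integral_add hgW (integrable_const h)]
  set δ := ε / (2 * h * N)
  have hδ : 0 < δ := by positivity
  have hNδ : h * N * δ = ε / 2 := by simp only [δ]; field_simp
  filter_upwards [(Finset.eventually_all (Finset.range N)).2 fun i _ =>
    hP (F i) (hF i) _ (lt_add_of_pos_right _ hδ)] with n hn
  have hind : ∀ i, BddBelow (range ((Z n ⁻¹' F i).indicator (1 : Ω → ℝ))) := fun i =>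
    bddBelow_range_indicator_one _
  have hind' : ∀ i, BddAbove (range ((Z n ⁻¹' F i).indicator (1 : Ω → ℝ))) := fun i =>
    bddAbove_range_indicator_one _
  calc outerExp μ (fun ω => g (Z n ω))
      ≤ outerExp μ (fun ω => h * ∑ i ∈ Finset.range N, (Z n ⁻¹' F i).indicator 1 ω) :=
        outerExp_mono ⟨0, by rintro _ ⟨ω, rfl⟩; exact hg₀ _⟩
          ((BddAbove.range_finsetSum _ hind').range_comp_left
            (monotone_mul_left_of_nonneg hh.le))
          fun ω => (hlayer (Z n ω)).1
    _ ≤ h * ∑ i ∈ Finset.range N, outerProb μ (Z n ⁻¹' F i) :=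
        (outerExp_const_mul_le hh (.range_finsetSum _ hind) (.range_finsetSum _ hind')).trans
          (mul_le_mul_of_nonneg_left (outerExp_sum_le _ hind hind') hh.le)
    _ < h * ∑ i ∈ Finset.range N, (μ.real (W ⁻¹' F i) + δ) :=
        mul_lt_mul_of_pos_left
          (Finset.sum_lt_sum_of_nonempty Finset.nonempty_range_add_one hn) hh
    _ = h * ∑ i ∈ Finset.range N, μ.real (W ⁻¹' F i) + ε / 2 := by
        rw [Finset.sum_add_distrib, Finset.sum_const, Finset.card_range, nsmul_eq_mul, mul_add,
          ← mul_assoc, hNδ]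
    _ ≤ a := by linarith

theorem PortmanteauClosed.eventually_outerExp_lt (hP : PortmanteauClosed μ Z W)
    (hW : Measurable W) {g : T → ℝ} (hg : Continuous g) {C : ℝ} (hC : ∀ x, |g x| ≤ C) {a : ℝ}
    (ha : ∫ ω, g (W ω) ∂μ < a) :
    ∀ᶠ n in atTop, outerExp μ (fun ω => g (Z n ω)) < a := by
  have hgW : Integrable (fun ω => g (W ω)) μ :=
    .of_bound (hg.measurable.comp hW).aestronglyMeasurable C (ae_of_all _ fun ω => hC (W ω))
  have hshift := hP.eventually_outerExp_lt_of_nonneg hW (g := fun x => g x + C)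
    (hg.add continuous_const) (M := 2 * C)
    (fun x => by linarith [neg_le_of_abs_le (hC x)]) (fun x => by linarith [le_of_abs_le (hC x)])
    (a := a + C) (by simpa [integral_add hgW (integrable_const C)] using ha)
  filter_upwards [hshift] with n hn
  rwa [outerExp_add_const (bddBelow_range_of_abs_le fun ω => hC (Z n ω))
    (bddAbove_range_of_abs_le fun ω => hC (Z n ω)), add_lt_add_iff_right] at hn

theorem PortmanteauClosed.tendstoInDistHJ (hP : PortmanteauClosed μ Z W) (hW : Measurable W) :
    TendstoInDistHJ μ Z W := by
  rintro g hg ⟨C, hC⟩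
  refine tendsto_order.2 ⟨fun a ha => ?_, fun a ha => hP.eventually_outerExp_lt hW hg hC ha⟩
  have hneg := hP.eventually_outerExp_lt hW (g := fun x => -g x) hg.neg (C := C)
    (by simpa using hC) (a := -a) (by rw [integral_neg]; linarith)
  filter_upwards [hneg] with n hn
  have := neg_outerExp_neg_le (μ := μ) (bddBelow_range_of_abs_le fun ω => hC (Z n ω))
    (bddAbove_range_of_abs_le fun ω => hC (Z n ω))
  linarith

end Portmanteau

section ExtendedContinuity

variable {S S' : Type*} [TopologicalSpace S] [TopologicalSpace S'] {fn : ℕ → S → S'}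
  {f : S → S'} {x : S}

theorem tendsto_subseq_of_forall_tendsto_seq
    (hfn : ∀ u : ℕ → S, Tendsto u atTop (𝓝 x) →
      Tendsto (fun n => fn n (u n)) atTop (𝓝 (f x)))
    {φ : ℕ → ℕ} (hφ : StrictMono φ) {y : ℕ → S} (hy : Tendsto y atTop (𝓝 x)) :
    Tendsto (fun j => fn (φ j) (y j)) atTop (𝓝 (f x)) := by
  set u := Function.extend φ y fun _ => x
  have hu : ∀ j, u (φ j) = y j := hφ.injective.extend_apply y _
  have hux : Tendsto u atTop (𝓝 x) := by
    refine tendsto_iff_forall_eventually_mem.2 fun U hU => ?_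
    obtain ⟨J, hJ⟩ := eventually_atTop.1 (hy.eventually_mem hU)
    filter_upwards [eventually_ge_atTop (φ J)] with n hn
    by_cases hn' : ∃ j, φ j = n
    · obtain ⟨j, rfl⟩ := hn'
      rw [hu]
      exact hJ j (hφ.le_iff_le.1 hn)
    · rw [show u n = x from Function.extend_apply' _ _ _ hn']
      exact mem_of_mem_nhds hU
  simpa only [Function.comp_def, hu] using (hfn u hux).comp hφ.tendsto_atTop

theorem tendsto_prod_atTop_nhds_of_forall_tendsto_seq [FirstCountableTopology S]
    (hfn : ∀ u : ℕ → S, Tendsto u atTop (𝓝 x) →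
      Tendsto (fun n => fn n (u n)) atTop (𝓝 (f x))) :
    Tendsto (fun p : ℕ × S => fn p.1 p.2) (atTop ×ˢ 𝓝 x) (𝓝 (f x)) := by
  refine tendsto_iff_forall_eventually_mem.2 fun V hV => ?_
  by_contra hfreq
  obtain ⟨p, hp, hpV⟩ := exists_seq_forall_of_frequently (not_eventually.1 hfreq)
  obtain ⟨φ, hφ, hφ'⟩ := strictMono_subseq_of_tendsto_atTop (tendsto_fst.comp hp)
  have := tendsto_subseq_of_forall_tendsto_seq hfn hφ'
    ((tendsto_snd.comp hp).comp hφ.tendsto_atTop)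
  obtain ⟨j, hj⟩ := (this.eventually_mem hV).exists
  exact hpV (φ j) hj

theorem IsClosed.mem_of_tendsto_prod_of_forall_mem_closure {F : Set S'} (hF : IsClosed F)
    (hfn : Tendsto (fun p : ℕ × S => fn p.1 p.2) (atTop ×ˢ 𝓝 x) (𝓝 (f x)))
    (hx : ∀ k, x ∈ closure (⋃ m ≥ k, fn m ⁻¹' F)) : f x ∈ F := by
  refine hF.mem_of_frequently_of_tendsto ?_ hfn
  rw [(atTop_basis.prod (𝓝 x).basis_sets).frequently_iff]
  rintro ⟨k, U⟩ ⟨-, hU⟩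
  obtain ⟨y, hyU, hy⟩ := mem_closure_iff_nhds.1 (hx k) U hU
  obtain ⟨m, hm, hyF⟩ := mem_iUnion₂.1 hy
  exact ⟨(m, y), ⟨hm, hyU⟩, hyF⟩

end ExtendedContinuity

theorem PortmanteauClosed.comp {Ω S S' : Type*} [MeasurableSpace Ω] {μ : Measure Ω}
    [IsFiniteMeasure μ] [TopologicalSpace S] [MeasurableSpace S] [OpensMeasurableSpace S]
    [TopologicalSpace S'] {X : ℕ → Ω → S} {Y : Ω → S} (hXY : PortmanteauClosed μ X Y)
    (hY : Measurable Y) {fn : ℕ → S → S'} {f : S → S'}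
    (hfn : ∀ ω, Tendsto (fun p : ℕ × S => fn p.1 p.2) (atTop ×ˢ 𝓝 (Y ω)) (𝓝 (f (Y ω)))) :
    PortmanteauClosed μ (fun n ω => fn n (X n ω)) (fun ω => f (Y ω)) := by
  intro F hF a ha
  set K : ℕ → Set S := fun k => closure (⋃ m ≥ k, fn m ⁻¹' F)
  have hK : Antitone fun k => Y ⁻¹' K k := fun k l hkl =>
    preimage_mono (closure_mono (biUnion_subset_biUnion_left fun _ hm => le_trans hkl hm))
  have hlim : Tendsto (fun k => μ.real (Y ⁻¹' K k)) atTop (𝓝 (μ.real (⋂ k, Y ⁻¹' K k))) :=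
    (ENNReal.tendsto_toReal (measure_ne_top μ _)).comp <| tendsto_measure_iInter_atTop
      (fun _ => (hY isClosed_closure.measurableSet).nullMeasurableSet) hK
      ⟨0, measure_ne_top μ _⟩
  have hsub : ⋂ k, Y ⁻¹' K k ⊆ (fun ω => f (Y ω)) ⁻¹' F := fun ω hω =>
    hF.mem_of_tendsto_prod_of_forall_mem_closure (hfn ω) fun k => mem_iInter.1 hω k
  obtain ⟨k, hk⟩ := (hlim.eventually_lt_const ((measureReal_mono hsub).trans_lt ha)).exists
  filter_upwards [hXY (K k) isClosed_closure _ hk, eventually_ge_atTop k] with n hn hkn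
  have hsubn : (fun ω => fn n (X n ω)) ⁻¹' F ⊆ X n ⁻¹' K k := fun ω hω =>
    subset_closure (mem_iUnion₂.2 ⟨n, hkn, hω⟩)
  exact (outerProb_mono hsubn).trans_lt hn

theorem extended_continuous_mapping_general
    {Ω S S' : Type*} [MeasurableSpace Ω]
    [MetricSpace S] [MeasurableSpace S] [BorelSpace S]
    [MetricSpace S'] [MeasurableSpace S'] [BorelSpace S']
    (μ : Measure Ω) [IsProbabilityMeasure μ]
    (S₀ : Set S)
    (fn : ℕ → S → S') (f : S → S') (hf : Measurable f)
    (hconv : ∀ (u : ℕ → S) (x : S), x ∈ S₀ → Tendsto u atTop (nhds x) →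
      Tendsto (fun n => fn n (u n)) atTop (nhds (f x)))
    (X : ℕ → Ω → S) (Y : Ω → S) (hY : Measurable Y)
    (hrange : ∀ ω, Y ω ∈ S₀)
    (hXY : TendstoInDistHJ μ X Y) :
    TendstoInDistHJ μ (fun n ω => fn n (X n ω)) (fun ω => f (Y ω)) := by
  have hfn : ∀ ω, Tendsto (fun p : ℕ × S => fn p.1 p.2) (atTop ×ˢ 𝓝 (Y ω)) (𝓝 (f (Y ω))) :=
    fun ω => tendsto_prod_atTop_nhds_of_forall_tendsto_seq fun u => hconv u (Y ω) (hrange ω)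
  exact ((hXY.portmanteauClosed hY).comp hY hfn).tendstoInDistHJ (hf.comp hY)

/-- The extended continuous mapping theorem (Theorem D.2). -/
theorem extended_continuous_mapping
    {Ω S S' : Type*} [MeasurableSpace Ω]
    [MetricSpace S] [MeasurableSpace S] [BorelSpace S]
    [MetricSpace S'] [MeasurableSpace S'] [BorelSpace S']
    (μ : Measure Ω) [IsProbabilityMeasure μ]
    (S₀ : Set S) (hS₀ : MeasurableSet S₀)
    (fn : ℕ → S → S') (f : S → S') (hf : Measurable f)
    (hconv : ∀ (u : ℕ → S) (x : S), x ∈ S₀ → Tendsto u atTop (nhds x) →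
      Tendsto (fun n => fn n (u n)) atTop (nhds (f x)))
    (X : ℕ → Ω → S) (Y : Ω → S) (hY : Measurable Y)
    (hrange : ∀ ω, Y ω ∈ S₀)
    (hXY : TendstoInDistHJ μ X Y) :
    TendstoInDistHJ μ (fun n ω => fn n (X n ω)) (fun ω => f (Y ω)) :=
  extended_continuous_mapping_general μ S₀ fn f hf hconv X Y hY hrange hXY
end
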